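/- arXiv:1904.01361 — 7 statements merged into one kernel-verified Lean document; each statement's English description precedes it below -/
import Mathlib

section
/- Let ‖·‖ be any norm on ℝ^d and let x₁,…,xₙ ∈ ℝ^d satisfy ‖xᵢ‖ ≤ 1 for all i and Σᵢ xᵢ = 0. Then there exists a permutation π of [n] such that for every k ∈ [n], ‖Σ_{i=1}^k x_{π(i)}‖ ≤ d. -/
/-!
Following Grinberg and Sevastjanov, call weights `μ ∈ [0, 1]ⁿ` balancing for `v` if
`∑ μᵢ • vᵢ = 0`. Then `p (∑ vᵢ) = p (∑ (1 - μᵢ) • vᵢ) ≤ ∑ (1 - μᵢ)`, so it suffices to order the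
vectors from the back, keeping on the remaining ones a balancing weight of deficit
`∑ (1 - μᵢ) ≤ d`; constant weights start this off since `∑ vᵢ = 0`. To remove one vector, rescale
the weights to total mass `n - d - 1`. While the `(vᵢ, 1)` with `μᵢ` fractional are linearly
dependent, moving `μ` along a relation among them keeps it balancing with the same mass and
pushes one more weight to `0` or `1`. Once at most `d + 1` weights are fractional, the mass count
forces some `μᵢ = 0`: that vector goes last, and the others keep deficit `≤ d`.
-/

open Finset

lemma Fin.exists_perm_castSucc_eq_succAbove {n : ℕ} (i : Fin (n + 1)) (σ : Equiv.Perm (Fin n)) :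
    ∃ π : Equiv.Perm (Fin (n + 1)), ∀ j, π j.castSucc = i.succAbove (σ j) :=
  ⟨(finSuccEquiv' (Fin.last n)).trans (σ.optionCongr.trans (finSuccEquiv' i).symm), fun j => by
    simp [finSuccEquiv'_last_apply_castSucc]⟩

namespace Steinitz

/-- The `t ≥ 0` at which `a + t * b` leaves `[0, 1]` (junk `0` for `b = 0`). -/
noncomputable def exitTime (a b : ℝ) : ℝ := if 0 < b then (1 - a) / b else a / -b

lemma exitTime_nonneg {a : ℝ} (b : ℝ) (ha : a ∈ Set.Icc (0 : ℝ) 1) : 0 ≤ exitTime a b := by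
  unfold exitTime
  split_ifs with hb
  · exact div_nonneg (by linarith [ha.2]) hb.le
  · exact div_nonneg ha.1 (by linarith)

lemma add_mul_mem_Icc_of_le_exitTime {a b t : ℝ} (ha : a ∈ Set.Icc (0 : ℝ) 1) (hb : b ≠ 0)
    (ht : t ∈ Set.Icc 0 (exitTime a b)) : a + t * b ∈ Set.Icc (0 : ℝ) 1 := by
  obtain ⟨ht0, ht⟩ := ht
  unfold exitTime at ht
  split_ifs at ht with hb'
  · rw [le_div_iff₀ hb'] at ht
    constructor <;> nlinarith [ha.1]
  · have hneg : 0 < -b := neg_pos.mpr ((not_lt.mp hb').lt_of_ne hb)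
    rw [le_div_iff₀ hneg] at ht
    constructor <;> nlinarith [ha.2]

lemma add_exitTime_mul_eq_zero_or_one (a : ℝ) {b : ℝ} (hb : b ≠ 0) :
    a + exitTime a b * b = 0 ∨ a + exitTime a b * b = 1 := by
  unfold exitTime
  split_ifs with hb'
  · right; field_simp; ring
  · left; field_simp; ring

variable {ι E : Type*} [Fintype ι] [AddCommGroup E] [Module ℝ E]

def IsBalancedWeight (v : ι → E) (μ : ι → ℝ) : Prop :=
  (∀ i, μ i ∈ Set.Icc (0 : ℝ) 1) ∧ ∑ i, μ i • v i = 0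

noncomputable def fracSupport (μ : ι → ℝ) : Finset ι := {i | μ i ∈ Set.Ioo (0 : ℝ) 1}

lemma mem_fracSupport {μ : ι → ℝ} {i : ι} : i ∈ fracSupport μ ↔ μ i ∈ Set.Ioo (0 : ℝ) 1 := by
  simp [fracSupport]

lemma exists_fracSupport_ssubset {μ c : ι → ℝ} (hμ : ∀ i, μ i ∈ Set.Icc (0 : ℝ) 1)
    (hc : ∀ i ∉ fracSupport μ, c i = 0) (hc0 : c ≠ 0) :
    ∃ t : ℝ, (∀ i, μ i + t * c i ∈ Set.Icc (0 : ℝ) 1) ∧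
      fracSupport (μ + t • c) ⊂ fracSupport μ := by
  classical
  have hT : ({i | c i ≠ 0} : Finset ι).Nonempty := by
    obtain ⟨i, hi⟩ := Function.ne_iff.mp hc0
    exact ⟨i, by simpa using hi⟩
  obtain ⟨i₀, hi₀, hmin⟩ := exists_min_image _ (fun i => exitTime (μ i) (c i)) hT
  simp only [mem_filter_univ] at hi₀ hmin
  set t := exitTime (μ i₀) (c i₀)
  have hbound : ∀ i, μ i + t * c i ∈ Set.Icc (0 : ℝ) 1 := by
    intro i
    by_cases hci : c i = 0
    · simpa [hci] using hμ i
    · exact add_mul_mem_Icc_of_le_exitTime (hμ i) hci ⟨exitTime_nonneg _ (hμ i₀), hmin i hci⟩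
  refine ⟨t, hbound, (Finset.ssubset_iff_of_subset fun i hi => ?_).mpr ⟨i₀, ?_, ?_⟩⟩
  · by_contra hi'
    rw [mem_fracSupport, Pi.add_apply, Pi.smul_apply, smul_eq_mul, hc i hi', mul_zero,
      add_zero] at hi
    exact hi' (mem_fracSupport.mpr hi)
  · by_contra hi'
    exact hi₀ (hc i₀ hi')
  · rw [mem_fracSupport]
    rcases add_exitTime_mul_eq_zero_or_one (μ i₀) hi₀ with h | h <;> simp [t, h]

lemma exists_relation_sum_zero_of_finrank_succ_lt_card [FiniteDimensional ℝ E]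
    (v : ι → E) {F : Finset ι} (hF : Module.finrank ℝ E + 1 < #F) :
    ∃ c : ι → ℝ, (∀ i ∉ F, c i = 0) ∧ ∑ i, c i • v i = 0 ∧ ∑ i, c i = 0 ∧ c ≠ 0 := by
  classical
  have hdep : ¬ LinearIndepOn ℝ (fun i => (v i, (1 : ℝ))) (F : Set ι) := fun h => by
    have := h.fintype_card_le_finrank
    simp [Module.finrank_prod] at this
    omega
  obtain ⟨c, hc, i, hi, hci⟩ := by simpa [linearIndepOn_finset_iff] using hdep
  refine ⟨fun i => if i ∈ F then c i else 0, fun i hi => if_neg hi, ?_, ?_,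
    Function.ne_iff.mpr ⟨i, by simpa [hi] using hci⟩⟩
  · simpa [ite_smul, Finset.sum_ite_mem, Prod.fst_sum] using congrArg Prod.fst hc
  · simpa [Finset.sum_ite_mem, Prod.snd_sum] using congrArg Prod.snd hc

lemma IsBalancedWeight.add_smul {v : ι → E} {μ c : ι → ℝ} {t : ℝ} (hμ : IsBalancedWeight v μ)
    (hμc : ∀ i, μ i + t * c i ∈ Set.Icc (0 : ℝ) 1) (hc : ∑ i, c i • v i = 0) :
    IsBalancedWeight v (μ + t • c) := by
  refine ⟨by simpa using hμc, ?_⟩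
  simp only [Pi.add_apply, Pi.smul_apply, smul_eq_mul, _root_.add_smul, mul_smul, sum_add_distrib,
    ← smul_sum, hμ.2, hc, smul_zero, add_zero]

theorem exists_isBalancedWeight_card_fracSupport_le [FiniteDimensional ℝ E] {v : ι → E}
    {μ : ι → ℝ} (hμ : IsBalancedWeight v μ) :
    ∃ μ', IsBalancedWeight v μ' ∧ ∑ i, μ' i = ∑ i, μ i ∧
      #(fracSupport μ') ≤ Module.finrank ℝ E + 1 := by
  by_cases hF : #(fracSupport μ) ≤ Module.finrank ℝ E + 1
  · exact ⟨μ, hμ, rfl, hF⟩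
  obtain ⟨c, hcF, hcv, hc1, hc0⟩ :=
    exists_relation_sum_zero_of_finrank_succ_lt_card v (not_le.mp hF)
  obtain ⟨t, ht, hlt⟩ := exists_fracSupport_ssubset hμ.1 hcF hc0
  obtain ⟨μ', hμ', hsum, hcard⟩ := exists_isBalancedWeight_card_fracSupport_le (hμ.add_smul ht hcv)
  refine ⟨μ', hμ', ?_, hcard⟩
  simp [hsum, sum_add_distrib, ← mul_sum, hc1]
termination_by #(fracSupport μ)
decreasing_by exact card_lt_card hlt

lemma exists_eq_zero_of_card_fracSupport_le {μ : ι → ℝ} {D : ℕ} (hμ : ∀ i, μ i ∈ Set.Icc (0 : ℝ) 1)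
    (hF : #(fracSupport μ) ≤ D + 1) (hsum : D + 1 ≤ ∑ i, (1 - μ i)) : ∃ i, μ i = 0 := by
  by_contra! hpos
  have hsupp : ∑ i, (1 - μ i) = ∑ i ∈ fracSupport μ, (1 - μ i) := by
    refine (sum_subset (subset_univ _) fun i _ hi => ?_).symm
    have : μ i = 1 := by
      by_contra h
      exact hi (mem_fracSupport.mpr ⟨(hμ i).1.lt_of_ne' (hpos i), (hμ i).2.lt_of_ne h⟩)
    rw [this, sub_self]
  have hlt : ∑ i ∈ fracSupport μ, (1 - μ i) < D + 1 := by
    rcases (fracSupport μ).eq_empty_or_nonempty with h | h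
    · rw [h, sum_empty]; positivity
    calc ∑ i ∈ fracSupport μ, (1 - μ i) < ∑ i ∈ fracSupport μ, 1 :=
          sum_lt_sum_of_nonempty h fun i hi => by linarith [(mem_fracSupport.mp hi).1]
      _ ≤ D + 1 := by simpa using (Nat.cast_le (α := ℝ)).mpr hF
  linarith

lemma isBalancedWeight_zero (v : ι → E) : IsBalancedWeight v 0 := by
  simp [IsBalancedWeight]

lemma IsBalancedWeight.smul {v : ι → E} {μ : ι → ℝ} {s : ℝ} (hμ : IsBalancedWeight v μ)
    (hs : s ∈ Set.Icc (0 : ℝ) 1) : IsBalancedWeight v (s • μ) := by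
  refine ⟨fun i => ⟨mul_nonneg hs.1 (hμ.1 i).1, ?_⟩, ?_⟩
  · simpa using mul_le_one₀ hs.2 (hμ.1 i).1 (hμ.1 i).2
  · simp only [Pi.smul_apply, smul_eq_mul, mul_smul, ← smul_sum, hμ.2, smul_zero]

lemma sum_one_sub (μ : ι → ℝ) : ∑ i, (1 - μ i) = Fintype.card ι - ∑ i, μ i := by
  simp [sum_sub_distrib]

theorem IsBalancedWeight.exists_eq_zero [FiniteDimensional ℝ E] [Nonempty ι] {v : ι → E}
    {μ : ι → ℝ} (hμ : IsBalancedWeight v μ) (hμD : ∑ i, (1 - μ i) ≤ Module.finrank ℝ E) :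
    ∃ μ', IsBalancedWeight v μ' ∧ ∑ i, (1 - μ' i) ≤ Module.finrank ℝ E + 1 ∧ ∃ i, μ' i = 0 := by
  set D := Module.finrank ℝ E
  by_cases hcard : Fintype.card ι ≤ D
  · refine ⟨0, isBalancedWeight_zero v, ?_, Classical.arbitrary ι, rfl⟩
    simpa using (Nat.cast_le (α := ℝ)).mpr (hcard.trans D.le_succ)
  rw [not_le, ← Nat.add_one_le_iff, ← Nat.cast_le (α := ℝ), Nat.cast_add_one] at hcard
  rw [sum_one_sub] at hμD
  have hμpos : 0 < ∑ i, μ i := by linarith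
  set s := (Fintype.card ι - (D + 1)) / ∑ i, μ i
  have hs : s ∈ Set.Icc (0 : ℝ) 1 := by
    rw [Set.mem_Icc, div_le_one hμpos]
    exact ⟨div_nonneg (by linarith) hμpos.le, by linarith⟩
  obtain ⟨μ', hμ', hsum, hF⟩ := exists_isBalancedWeight_card_fracSupport_le (hμ.smul hs)
  have hμ'D : ∑ i, (1 - μ' i) = D + 1 := by
    rw [sum_one_sub, hsum]
    simp only [Pi.smul_apply, smul_eq_mul, ← mul_sum, s]
    field_simp
    ring
  exact ⟨μ', hμ', hμ'D.le, exists_eq_zero_of_card_fracSupport_le hμ'.1 hF hμ'D.ge⟩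

lemma IsBalancedWeight.seminorm_sum_le {v : ι → E} {μ : ι → ℝ} (hμ : IsBalancedWeight v μ)
    (p : Seminorm ℝ E) (hv : ∀ i, p (v i) ≤ 1) : p (∑ i, v i) ≤ ∑ i, (1 - μ i) := by
  have hsum : ∑ i, v i = ∑ i, (1 - μ i) • v i := by
    simp [sub_smul, sum_sub_distrib, hμ.2]
  calc p (∑ i, v i) ≤ ∑ i, p ((1 - μ i) • v i) :=
        hsum ▸ le_sum_of_subadditive p (map_zero p).le (map_add_le_add p) _ _
    _ = ∑ i, (1 - μ i) * p (v i) := by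
      refine sum_congr rfl fun i _ => ?_
      rw [map_smul_eq_mul, Real.norm_of_nonneg (sub_nonneg.mpr (hμ.1 i).2)]
    _ ≤ ∑ i, (1 - μ i) :=
      sum_le_sum fun i _ => mul_le_of_le_one_right (sub_nonneg.mpr (hμ.1 i).2) (hv i)

lemma exists_isBalancedWeight_of_sum_eq_zero {v : ι → E} (hv : ∑ i, v i = 0) {D : ℝ}
    (hD : 0 ≤ D) : ∃ μ, IsBalancedWeight v μ ∧ ∑ i, (1 - μ i) ≤ D := by
  set r := min 1 (D / Fintype.card ι)
  have hr : r ∈ Set.Icc (0 : ℝ) 1 := ⟨le_min zero_le_one (by positivity), min_le_left _ _⟩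
  refine ⟨fun _ => 1 - r, ⟨fun _ => ⟨by linarith [hr.2], by linarith [hr.1]⟩, ?_⟩, ?_⟩
  · rw [← smul_sum, hv, smul_zero]
  · rcases eq_or_ne (Fintype.card ι) 0 with h | h
    · simp [h, hD]
    · calc ∑ _i : ι, (1 - (1 - r)) = Fintype.card ι * r := by simp
        _ ≤ Fintype.card ι * (D / Fintype.card ι) := by gcongr; exact min_le_right _ _
        _ = D := mul_div_cancel₀ _ (by exact_mod_cast h)

variable [FiniteDimensional ℝ E]

theorem IsBalancedWeight.exists_perm_seminorm_sum_Iic_le (p : Seminorm ℝ E) {n : ℕ}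
    {v : Fin n → E} (hv : ∀ i, p (v i) ≤ 1) {μ : Fin n → ℝ} (hμ : IsBalancedWeight v μ)
    (hμD : ∑ i, (1 - μ i) ≤ Module.finrank ℝ E) :
    ∃ π : Equiv.Perm (Fin n), ∀ k, p (∑ i ∈ Iic k, v (π i)) ≤ Module.finrank ℝ E := by
  induction n with
  | zero => exact ⟨1, fun k => k.elim0⟩
  | succ n ih =>
    obtain ⟨μ', hμ', hμ'D, i₀, hi₀⟩ := hμ.exists_eq_zero hμD
    have hrest : IsBalancedWeight (v ∘ i₀.succAbove) (μ' ∘ i₀.succAbove) :=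
      ⟨fun i => hμ'.1 _, by simpa [Fin.sum_univ_succAbove _ i₀, hi₀] using hμ'.2⟩
    have hrestD : ∑ i, (1 - (μ' ∘ i₀.succAbove) i) ≤ Module.finrank ℝ E := by
      rw [Fin.sum_univ_succAbove _ i₀, hi₀] at hμ'D
      simp only [Function.comp_apply]
      linarith
    obtain ⟨σ, hσ⟩ := ih (fun i => hv _) hrest hrestD
    obtain ⟨π, hπ⟩ := Fin.exists_perm_castSucc_eq_succAbove i₀ σ
    refine ⟨π, Fin.lastCases ?_ fun j => ?_⟩
    · rw [show Iic (Fin.last n) = univ by ext; simp [Fin.le_last], Equiv.sum_comp π v]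
      exact (hμ.seminorm_sum_le p hv).trans hμD
    · simpa [Fin.sum_Iic_castSucc, hπ] using hσ j

end Steinitz

theorem Seminorm.exists_perm_sum_Iic_le_finrank {E : Type*} [AddCommGroup E] [Module ℝ E]
    [FiniteDimensional ℝ E] (p : Seminorm ℝ E) {n : ℕ} {v : Fin n → E} (hv : ∀ i, p (v i) ≤ 1)
    (hsum : ∑ i, v i = 0) :
    ∃ π : Equiv.Perm (Fin n), ∀ k, p (∑ i ∈ Iic k, v (π i)) ≤ Module.finrank ℝ E := by
  obtain ⟨μ, hμ, hμD⟩ := Steinitz.exists_isBalancedWeight_of_sum_eq_zero hsum (Nat.cast_nonneg _)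
  exact hμ.exists_perm_seminorm_sum_Iic_le p hv hμD

/-- Steinitz Lemma (Sevastjanov–Banaszczyk bound `d`): for any norm `N` on `ℝ^d`
and vectors `x₁,…,xₙ` of norm at most 1 summing to zero, there is a permutation
whose every prefix sum has norm at most `d`. -/
theorem steinitz_lemma (d n : ℕ) (N : (Fin d → ℝ) → ℝ)
    (hN_add : ∀ a b : Fin d → ℝ, N (a + b) ≤ N a + N b)
    (hN_smul : ∀ (c : ℝ) (a : Fin d → ℝ), N (c • a) = |c| * N a)
    (x : Fin n → (Fin d → ℝ))
    (hx : ∀ i, N (x i) ≤ 1) (hsum : ∑ i, x i = 0) :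
    ∃ π : Equiv.Perm (Fin n), ∀ k : Fin n,
      N (∑ i ∈ Finset.univ.filter (fun i => i ≤ k), x (π i)) ≤ d := by
  let p : Seminorm ℝ (Fin d → ℝ) :=
    Seminorm.of N hN_add fun c a => by rw [hN_smul, Real.norm_eq_abs]
  obtain ⟨π, hπ⟩ := p.exists_perm_sum_Iic_le_finrank hx hsum
  rw [Module.finrank_fin_fun] at hπ
  exact ⟨π, fun k => filter_ge_eq_Iic (a := k) ▸ hπ k⟩
end

section
/- Let A ∈ ℤ^{m×n}. Every element g of the Graver basis of A satisfies ‖g‖₁ ≤ (2m‖A‖_∞ + 1)^m. -/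
/-- `x` is conformal to `y`: they lie in the same orthant and `|xᵢ| ≤ |yᵢ|`. -/
def ConformalTo {n : ℕ} (x y : Fin n → ℤ) : Prop :=
  ∀ i, 0 ≤ x i * y i ∧ |x i| ≤ |y i|

/-- `g` is an element of the Graver basis of `A`: a `⊑`-minimal nonzero element
of the integer kernel of `A`. -/
def InGraver {m n : ℕ} (A : Matrix (Fin m) (Fin n) ℤ) (g : Fin n → ℤ) : Prop :=
  g ≠ 0 ∧ A.mulVec g = 0 ∧
    ∀ h : Fin n → ℤ, h ≠ 0 → A.mulVec h = 0 → ConformalTo h g → h = g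

/-!
List each column index `j` of `A` with multiplicity `|g j|` and read the list as a walk whose
steps are `sign (g j) • Aᵀ j`; the steps sum to `A *ᵥ g = 0` and have sup norm at most `C`.
By the Steinitz lemma in `ℝ^m` the steps can be reordered so that every partial sum lies in
the box `[-mC, mC]^m`, which has `(2mC + 1)^m` points. If the walk were longer, two proper
prefixes would have equal sums, and the steps between them would form a nonzero kernel element
conformal to `g` with smaller `ℓ₁`-norm, contradicting minimality.

The Steinitz lemma (with constant `dim E`) follows Grinberg and Sevastyanov: a set `S` of
steps carries weights `μ ∈ [0,1]^S` with `∑ μ = #S - dim E` and `∑ μ i • v i = 0`. Rounding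
`μ` to a vertex of this polytope produces a zero weight; that step is put last and the argument
recurses on the rest, while the full sum `∑ (1 - μ i) • v i` has norm at most `dim E * C`.
-/

open Finset Module Matrix

section Steinitz

variable {ι E : Type*}

lemma exists_nontrivial_affine_relation_of_finrank_succ_lt_card [AddCommGroup E]
    [Module ℝ E] [FiniteDimensional ℝ E] (v : ι → E) {F : Finset ι} (hF : finrank ℝ E + 1 < #F) :
    ∃ d : ι → ℝ, (∀ i ∉ F, d i = 0) ∧ (∃ i ∈ F, d i ≠ 0) ∧
      ∑ i ∈ F, d i = 0 ∧ ∑ i ∈ F, d i • v i = 0 := by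
  classical
  have hdep : ¬ LinearIndependent ℝ fun i : F => (v i, (1 : ℝ)) := fun hli => by
    have := hli.fintype_card_le_finrank
    rw [Fintype.card_coe, finrank_prod, finrank_self] at this
    omega
  obtain ⟨w, hw, i, hi⟩ := Fintype.not_linearIndependent_iff.1 hdep
  refine ⟨fun j => if h : j ∈ F then w ⟨j, h⟩ else 0, fun j hj => dif_neg hj,
    ⟨i, i.2, by simpa using hi⟩, ?_, ?_⟩
  · have := congrArg Prod.snd hw
    simp only [Prod.snd_sum, Prod.smul_mk, smul_eq_mul, mul_one, Prod.snd_zero] at this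
    rw [← Finset.sum_coe_sort F]
    simpa using this
  · have := congrArg Prod.fst hw
    simp only [Prod.fst_sum, Prod.smul_mk, Prod.fst_zero] at this
    rw [← Finset.sum_coe_sort F]
    simpa using this

/-- The first time `τ ≥ 0` at which `x + τ * d` leaves the open unit interval. -/
noncomputable def hitTime (x d : ℝ) : ℝ := if 0 < d then (1 - x) / d else -x / d

lemma hitTime_pos {x d : ℝ} (hx : x ∈ Set.Ioo 0 1) (hd : d ≠ 0) : 0 < hitTime x d := by
  obtain ⟨h0, h1⟩ := hx
  unfold hitTime
  split_ifs with hpos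
  · exact div_pos (by linarith) hpos
  · exact div_pos_of_neg_of_neg (by linarith) (lt_of_le_of_ne (not_lt.1 hpos) hd)

lemma add_mul_mem_Icc_of_le_hitTime {x d τ : ℝ} (hx : x ∈ Set.Icc 0 1) (hτ : 0 ≤ τ)
    (hτle : τ ≤ hitTime x d) : x + τ * d ∈ Set.Icc 0 1 := by
  obtain ⟨h0, h1⟩ := hx
  unfold hitTime at hτle
  rcases lt_trichotomy d 0 with hd | rfl | hd
  · rw [if_neg hd.not_gt, le_div_iff_of_neg hd] at hτle
    constructor <;> nlinarith
  · simp [h0, h1]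
  · rw [if_pos hd, le_div_iff₀ hd] at hτle
    constructor <;> nlinarith

lemma add_hitTime_mul_notMem_Ioo (x : ℝ) {d : ℝ} (hd : d ≠ 0) :
    x + hitTime x d * d ∉ Set.Ioo 0 1 := by
  unfold hitTime
  split_ifs <;> simp [div_mul_cancel₀ _ hd]

section Balancing

variable [AddCommGroup E] [Module ℝ E]

def IsBalancingWeight (v : ι → E) (S : Finset ι) (c : ℝ) (μ : ι → ℝ) : Prop :=
  (∀ i ∈ S, μ i ∈ Set.Icc (0 : ℝ) 1) ∧ ∑ i ∈ S, μ i = c ∧ ∑ i ∈ S, μ i • v i = 0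

noncomputable def fracSupport (S : Finset ι) (μ : ι → ℝ) : Finset ι :=
  S.filter fun i => μ i ∈ Set.Ioo 0 1

lemma mem_fracSupport {S : Finset ι} {μ : ι → ℝ} {i : ι} :
    i ∈ fracSupport S μ ↔ i ∈ S ∧ μ i ∈ Set.Ioo 0 1 := by
  simp [fracSupport]

namespace IsBalancingWeight

variable {v : ι → E} {S : Finset ι} {c : ℝ} {μ : ι → ℝ}

lemma smul (h : IsBalancingWeight v S c μ) {a : ℝ} (ha : a ∈ Set.Icc (0 : ℝ) 1) :
    IsBalancingWeight v S (a * c) (a • μ) := by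
  obtain ⟨hbox, hsum, hbal⟩ := h
  refine ⟨fun i hi => ?_, ?_, ?_⟩
  · exact ⟨mul_nonneg ha.1 (hbox i hi).1, mul_le_one₀ ha.2 (hbox i hi).1 (hbox i hi).2⟩
  · simp [← mul_sum, hsum]
  · simp [mul_smul, ← smul_sum, hbal]

lemma erase [DecidableEq ι] (h : IsBalancingWeight v S c μ) {j : ι} (hj : μ j = 0) :
    IsBalancingWeight v (S.erase j) c μ := by
  obtain ⟨hbox, hsum, hbal⟩ := h
  refine ⟨fun i hi => hbox i (mem_of_mem_erase hi), ?_, ?_⟩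
  · rwa [sum_erase _ hj]
  · rwa [sum_erase _ (by simp [hj])]

lemma exists_fracSupport_ssubset [FiniteDimensional ℝ E] (h : IsBalancingWeight v S c μ)
    (hF : finrank ℝ E + 1 < #(fracSupport S μ)) :
    ∃ μ', IsBalancingWeight v S c μ' ∧ fracSupport S μ' ⊂ fracSupport S μ := by
  obtain ⟨hbox, hsum, hbal⟩ := h
  obtain ⟨d, hd_out, ⟨i, hiF, hdi⟩, hd_sum, hd_bal⟩ :=
    exists_nontrivial_affine_relation_of_finrank_succ_lt_card v hF
  have hsupp : ∀ i, d i ≠ 0 → i ∈ fracSupport S μ := fun i hi => by_contra (hi <| hd_out i ·)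
  have hFS : fracSupport S μ ⊆ S := filter_subset _ _
  obtain ⟨i₀, hi₀, hmin⟩ := exists_min_image ((fracSupport S μ).filter fun i => d i ≠ 0)
    (fun i => hitTime (μ i) (d i)) ⟨i, mem_filter.2 ⟨hiF, hdi⟩⟩
  obtain ⟨hi₀F, hdi₀⟩ := mem_filter.1 hi₀
  set τ := hitTime (μ i₀) (d i₀)
  have hτ : 0 < τ := hitTime_pos (mem_fracSupport.1 hi₀F).2 hdi₀
  have hd_sum' : ∑ i ∈ S, d i = 0 := by
    rwa [← sum_subset hFS fun i _ hi => hd_out i hi]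
  have hd_bal' : ∑ i ∈ S, d i • v i = 0 := by
    rwa [← sum_subset hFS fun i _ hi => by simp [hd_out i hi]]
  refine ⟨μ + τ • d, ⟨fun i hi => ?_, ?_, ?_⟩, ?_⟩
  · by_cases hdi : d i = 0
    · simpa [hdi] using hbox i hi
    · exact add_mul_mem_Icc_of_le_hitTime (hbox i hi) hτ.le
        (hmin i (mem_filter.2 ⟨hsupp i hdi, hdi⟩))
  · simp [sum_add_distrib, ← mul_sum, hd_sum', hsum]
  · simp [add_smul, sum_add_distrib, mul_smul, ← smul_sum, hd_bal', hbal]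
  · refine (ssubset_iff_of_subset fun i hi => ?_).2
      ⟨i₀, hi₀F, fun h' => add_hitTime_mul_notMem_Ioo _ hdi₀ (mem_fracSupport.1 h').2⟩
    by_cases hdi : d i = 0
    · simpa [mem_fracSupport, hdi] using hi
    · exact hsupp i hdi

lemma finrank_succ_lt_card_fracSupport
    (h : IsBalancingWeight v S (#S - 1 - finrank ℝ E) μ) (hμ : ∀ i ∈ S, μ i ≠ 0) :
    finrank ℝ E + 1 < #(fracSupport S μ) := by
  obtain ⟨hbox, hsum, -⟩ := h
  set rest := S.filter fun i => μ i ∉ Set.Ioo 0 1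
  -- the weights off `F := fracSupport S μ` are `1`, so those on `F` sum to `#F - 1 - dim E`
  have hone : ∀ i ∈ rest, μ i = 1 := fun i hi => by
    obtain ⟨hiS, hi⟩ := mem_filter.1 hi
    by_contra hne
    exact hi ⟨(hbox i hiS).1.lt_of_ne (hμ i hiS).symm, (hbox i hiS).2.lt_of_ne hne⟩
  have hsplit : ∑ i ∈ fracSupport S μ, μ i + ∑ i ∈ rest, μ i = ∑ i ∈ S, μ i :=
    sum_filter_add_sum_filter_not _ _ _
  have hcard : (#(fracSupport S μ) : ℝ) + #rest = #S := by
    exact_mod_cast card_filter_add_card_filter_not _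
  rw [sum_congr rfl hone, sum_const, nsmul_one, hsum] at hsplit
  have hD : (0 : ℝ) ≤ finrank ℝ E := Nat.cast_nonneg _
  have hpos : 0 < ∑ i ∈ fracSupport S μ, μ i := by
    refine sum_pos (fun i hi => (mem_fracSupport.1 hi).2.1) (card_pos.1 ?_)
    have : (1 : ℝ) ≤ #(fracSupport S μ) := by
      have : 0 ≤ ∑ i ∈ fracSupport S μ, μ i :=
        sum_nonneg fun i hi => (mem_fracSupport.1 hi).2.1.le
      linarith
    exact_mod_cast this
  have : (finrank ℝ E : ℝ) + 1 < #(fracSupport S μ) := by linarith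
  exact_mod_cast this

lemma exists_eq_zero [FiniteDimensional ℝ E]
    (h : IsBalancingWeight v S (#S - 1 - finrank ℝ E) μ) :
    ∃ μ', IsBalancingWeight v S (#S - 1 - finrank ℝ E) μ' ∧ ∃ j ∈ S, μ' j = 0 := by
  induction hn : #(fracSupport S μ) using Nat.strong_induction_on generalizing μ with
  | _ n ih =>
  by_cases hz : ∃ j ∈ S, μ j = 0
  · exact ⟨μ, h, hz⟩
  push Not at hz
  obtain ⟨μ', h', hlt⟩ := h.exists_fracSupport_ssubset (h.finrank_succ_lt_card_fracSupport hz)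
  exact ih _ (hn ▸ card_lt_card hlt) h' rfl

lemma exists_erase [DecidableEq ι] [FiniteDimensional ℝ E]
    (h : IsBalancingWeight v S (#S - finrank ℝ E) μ) (hS : finrank ℝ E < #S) :
    ∃ j ∈ S, ∃ μ', IsBalancingWeight v (S.erase j) (#(S.erase j) - finrank ℝ E) μ' := by
  have hS' : (finrank ℝ E : ℝ) + 1 ≤ #S := by exact_mod_cast hS
  have hpos : (0 : ℝ) < #S - finrank ℝ E := by linarith
  have ha : (#S - 1 - finrank ℝ E : ℝ) / (#S - finrank ℝ E) ∈ Set.Icc (0 : ℝ) 1 :=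
    ⟨div_nonneg (by linarith) hpos.le, div_le_one_of_le₀ (by linarith) hpos.le⟩
  have hscaled := h.smul ha
  rw [div_mul_cancel₀ _ hpos.ne'] at hscaled
  obtain ⟨μ', h', j, hj, hj0⟩ := hscaled.exists_eq_zero
  refine ⟨j, hj, μ', ?_⟩
  rw [card_erase_of_mem hj, Nat.cast_sub (card_pos.2 ⟨j, hj⟩), Nat.cast_one]
  exact h'.erase hj0

end IsBalancingWeight

end Balancing

lemma IsBalancingWeight.norm_sum_le [SeminormedAddCommGroup E] [NormedSpace ℝ E] {v : ι → E}
    {S : Finset ι} {c : ℝ} {μ : ι → ℝ} (h : IsBalancingWeight v S c μ) {C : ℝ}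
    (hv : ∀ i ∈ S, ‖v i‖ ≤ C) : ‖∑ i ∈ S, v i‖ ≤ (#S - c) * C := by
  obtain ⟨hbox, hsum, hbal⟩ := h
  have hcompl : ∑ i ∈ S, v i = ∑ i ∈ S, (1 - μ i) • v i := by
    simp [sub_smul, sum_sub_distrib, hbal]
  calc ‖∑ i ∈ S, v i‖ = ‖∑ i ∈ S, (1 - μ i) • v i‖ := by rw [hcompl]
    _ ≤ ∑ i ∈ S, (1 - μ i) * C := norm_sum_le_of_le _ fun i hi => by
        have h1 : 0 ≤ 1 - μ i := sub_nonneg.2 (hbox i hi).2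
        rw [norm_smul, Real.norm_of_nonneg h1]
        exact mul_le_mul_of_nonneg_left (hv i hi) h1
    _ = (#S - c) * C := by simp [← sum_mul, sum_sub_distrib, hsum]

lemma List.norm_sum_map_le [SeminormedAddCommGroup E] {α : Type*} (f : α → E) {C : ℝ}
    {l : List α} (hf : ∀ a ∈ l, ‖f a‖ ≤ C) : ‖(l.map f).sum‖ ≤ l.length * C := by
  induction l with
  | nil => simp
  | cons a l ih =>
    simp only [List.map_cons, List.sum_cons, List.length_cons, Nat.cast_succ]
    have ha := hf a List.mem_cons_self
    have hl := ih fun b hb => hf b (List.mem_cons_of_mem a hb)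
    linarith [norm_add_le (f a) (l.map f).sum]

variable [NormedAddCommGroup E] [NormedSpace ℝ E] [FiniteDimensional ℝ E]

lemma exists_list_norm_sum_take_le_of_isBalancingWeight [DecidableEq ι] (v : ι → E) {C : ℝ}
    (hC : 0 ≤ C) (S : Finset ι) (hv : ∀ i ∈ S, ‖v i‖ ≤ C)
    (hμ : finrank ℝ E < #S → ∃ μ, IsBalancingWeight v S (#S - finrank ℝ E) μ) :
    ∃ l : List ι, (l : Multiset ι) = S.val ∧
      ∀ p, ‖((l.take p).map v).sum‖ ≤ finrank ℝ E * C := by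
  induction S using Finset.strongInduction with
  | H S ih =>
  by_cases hS : finrank ℝ E < #S
  swap
  · refine ⟨S.toList, Multiset.coe_toList _, fun p => ?_⟩
    calc _ ≤ (S.toList.take p).length * C :=
          List.norm_sum_map_le v fun a ha => hv a (by simpa using List.mem_of_mem_take ha)
      _ ≤ finrank ℝ E * C := by
          gcongr
          exact_mod_cast (List.length_take_le' p _).trans (by rw [length_toList]; omega)
  obtain ⟨μ, hμS⟩ := hμ hS
  obtain ⟨j, hj, μ', hμ'⟩ := hμS.exists_erase hS
  obtain ⟨l, hl, hlp⟩ := ih _ (erase_ssubset hj) (fun i hi => hv i (mem_of_mem_erase hi))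
    fun _ => ⟨μ', hμ'⟩
  have hlj : ((l ++ [j] : List ι) : Multiset ι) = S.val := by
    rw [Multiset.coe_eq_coe.2 (List.perm_append_singleton j l), ← Multiset.cons_coe, hl,
      erase_val, Multiset.cons_erase hj]
  have hlen : l.length = #S - 1 := by
    rw [← Multiset.coe_card, hl, ← card_erase_of_mem hj]
    rfl
  refine ⟨l ++ [j], hlj, fun p => ?_⟩
  rcases le_or_gt p l.length with hp | hp
  · rw [List.take_append_of_le_length hp]
    exact hlp p
  · rw [List.take_of_length_le (by rw [List.length_append, List.length_singleton]; omega)]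
    have hsum : ((l ++ [j]).map v).sum = ∑ i ∈ S, v i := by
      rw [sum_eq_multiset_sum, ← hlj, Multiset.map_coe, Multiset.sum_coe]
    rw [hsum]
    simpa using hμS.norm_sum_le hv

theorem Finset.exists_list_norm_sum_take_le [DecidableEq ι] (v : ι → E) (S : Finset ι) {C : ℝ}
    (hC : 0 ≤ C) (hv : ∀ i ∈ S, ‖v i‖ ≤ C) (h0 : ∑ i ∈ S, v i = 0) :
    ∃ l : List ι, (l : Multiset ι) = S.val ∧
      ∀ p, ‖((l.take p).map v).sum‖ ≤ finrank ℝ E * C := by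
  refine exists_list_norm_sum_take_le_of_isBalancingWeight v hC S hv fun hS => ?_
  have hS' : (finrank ℝ E : ℝ) < #S := by exact_mod_cast hS
  have hS0 : (0 : ℝ) < #S := (Nat.cast_nonneg _).trans_lt hS'
  refine ⟨fun _ => (#S - finrank ℝ E) / #S, fun i _ => ⟨?_, ?_⟩, ?_, ?_⟩
  · exact div_nonneg (by linarith) hS0.le
  · exact div_le_one_of_le₀ (by linarith [(Nat.cast_nonneg _ : (0 : ℝ) ≤ finrank ℝ E)]) hS0.le
  · rw [sum_const, nsmul_eq_mul]
    field_simp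
  · rw [← smul_sum, h0, smul_zero]

theorem List.exists_perm_norm_sum_take_le {α : Type*} (f : α → E) (L : List α) {C : ℝ}
    (hC : 0 ≤ C) (hf : ∀ a ∈ L, ‖f a‖ ≤ C) (h0 : (L.map f).sum = 0) :
    ∃ L' : List α, L'.Perm L ∧ ∀ p, ‖((L'.take p).map f).sum‖ ≤ finrank ℝ E * C := by
  obtain ⟨l, hl, hlp⟩ := Finset.exists_list_norm_sum_take_le (fun i : Fin L.length => f (L.get i))
    univ hC (fun i _ => hf _ (L.get_mem i)) (by simpa [← List.sum_ofFn] using h0)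
  refine ⟨l.map L.get, ?_, fun p => ?_⟩
  · rw [← Multiset.coe_eq_coe, ← Multiset.map_coe, hl, Fin.univ_val_map, List.ofFn_get]
  · simpa [← List.map_take, List.map_map, Function.comp_def] using hlp p

end Steinitz

theorem List.exists_perm_abs_sum_take_le {α : Type*} {m : ℕ} (f : α → Fin m → ℤ) (L : List α)
    {C : ℤ} (hC : 0 ≤ C) (hf : ∀ a ∈ L, ∀ r, |f a r| ≤ C) (h0 : (L.map f).sum = 0) :
    ∃ L' : List α, L'.Perm L ∧ ∀ p r, |((L'.take p).map f).sum r| ≤ m * C := by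
  let φ : (Fin m → ℤ) →+ (Fin m → ℝ) := (Int.castAddHom ℝ).compLeft (Fin m)
  have hC' : (0 : ℝ) ≤ C := by exact_mod_cast hC
  obtain ⟨L', hperm, hL'⟩ := L.exists_perm_norm_sum_take_le (φ ∘ f) hC'
    (fun a ha => (pi_norm_le_iff_of_nonneg hC').2 fun r => by
      simpa [φ] using (Int.cast_le (R := ℝ)).2 (hf a ha r))
    (by rw [← List.map_map, ← map_list_sum, h0, map_zero])
  refine ⟨L', hperm, fun p r => ?_⟩
  have := (norm_le_pi_norm _ r).trans (hL' p)
  rw [← List.map_map, ← map_list_sum, finrank_fin_fun] at this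
  simp only [φ, AddMonoidHom.compLeft_apply, Function.comp_apply, Int.coe_castAddHom,
    Real.norm_eq_abs] at this
  exact_mod_cast this

section Graver

variable {m n : ℕ}

def columnList (g : Fin n → ℤ) : List (Fin n) :=
  (List.finRange n).flatMap fun j => List.replicate (g j).natAbs j

lemma count_columnList (g : Fin n → ℤ) (j : Fin n) : (columnList g).count j = (g j).natAbs := by
  simp only [columnList, List.count_flatMap, ← Fin.sum_univ_def, Function.comp_def,
    List.count_replicate]
  simp

def signedCount (g : Fin n → ℤ) (W : List (Fin n)) : Fin n → ℤ :=
  fun j => W.count j * (g j).sign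

variable {g : Fin n → ℤ} {W : List (Fin n)}

lemma signedCount_append (g : Fin n → ℤ) (W₁ W₂ : List (Fin n)) :
    signedCount g (W₁ ++ W₂) = signedCount g W₁ + signedCount g W₂ := by
  ext j
  simp [signedCount, List.count_append, add_mul]

lemma signedCount_eq_self (hW : ∀ j, W.count j = (g j).natAbs) : signedCount g W = g := by
  ext j
  rw [signedCount, hW, mul_comm, Int.sign_mul_natAbs]

lemma mulVec_signedCount (A : Matrix (Fin m) (Fin n) ℤ) (g : Fin n → ℤ) (W : List (Fin n)) :
    A *ᵥ signedCount g W = (W.map fun j => (g j).sign • Aᵀ j).sum := by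
  induction W with
  | nil => ext r; simp [signedCount, mulVec, dotProduct]
  | cons a W ih =>
    rw [← List.singleton_append, signedCount_append, mulVec_add, ih]
    ext r
    simp [signedCount, mulVec, dotProduct, List.count_singleton', mul_comm]

lemma abs_signedCount {j : Fin n} (hW : W.count j ≤ (g j).natAbs) : |signedCount g W j| = W.count j := by
  rcases eq_or_ne (g j) 0 with h | h
  · simp_all [signedCount]
  · rw [signedCount, abs_mul, Int.abs_sign_of_ne_zero h, mul_one, Nat.abs_cast]

lemma conformalTo_signedCount (hW : ∀ j, W.count j ≤ (g j).natAbs) :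
    ConformalTo (signedCount g W) g := fun j => by
  refine ⟨?_, ?_⟩
  · rw [signedCount, mul_assoc, Int.sign_mul_self_eq_abs]
    positivity
  · rw [abs_signedCount (hW j), Int.abs_eq_natAbs]
    exact_mod_cast hW j

lemma sum_abs_signedCount (hW : ∀ j, W.count j ≤ (g j).natAbs) :
    ∑ j, |signedCount g W j| = W.length := by
  simp_rw [abs_signedCount (hW _)]
  have := Multiset.sum_count_eq_card (s := univ) (m := (W : Multiset (Fin n))) fun a _ => mem_univ a
  simp only [Multiset.coe_count, Multiset.coe_card] at this
  exact_mod_cast this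

lemma sum_abs_eq_length (hW : ∀ j, W.count j = (g j).natAbs) : ∑ j, |g j| = W.length := by
  conv_lhs => rw [← signedCount_eq_self hW]
  exact sum_abs_signedCount fun j => (hW j).le

lemma InGraver.mulVec_signedCount_take_ne {A : Matrix (Fin m) (Fin n) ℤ} (hg : InGraver A g)
    {L : List (Fin n)} (hL : ∀ j, L.count j = (g j).natAbs) {a b : ℕ} (hab : a < b)
    (hb : b < L.length) : A *ᵥ signedCount g (L.take a) ≠ A *ᵥ signedCount g (L.take b) := by
  intro heq
  set W := (L.drop a).take (b - a)
  have htake : L.take b = L.take a ++ W := by rw [← List.take_add, Nat.add_sub_cancel' hab.le]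
  have hW : ∀ j, W.count j ≤ (g j).natAbs := fun j =>
    (((List.take_sublist _ _).trans (List.drop_sublist _ _)).count_le j).trans (hL j).le
  have hlen : W.length = b - a := by simp only [W, List.length_take, List.length_drop]; omega
  have hker : A *ᵥ signedCount g W = 0 := by
    rwa [htake, signedCount_append, mulVec_add, left_eq_add] at heq
  have hne : signedCount g W ≠ 0 := fun h0 => by
    have := sum_abs_signedCount hW
    simp only [h0, Pi.zero_apply, abs_zero, sum_const_zero] at this
    omega
  have hsum := sum_abs_signedCount hW
  rw [hg.2.2 _ hne hker (conformalTo_signedCount hW), sum_abs_eq_length hL] at hsum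
  omega

lemma InGraver.sum_abs_le {A : Matrix (Fin m) (Fin n) ℤ} (hg : InGraver A g) {C : ℤ}
    (hC0 : 0 ≤ C) (hC : ∀ i j, |A i j| ≤ C) : ∑ j, |g j| ≤ (2 * (m : ℤ) * C + 1) ^ m := by
  have hstep : ∀ j r, |((g j).sign • Aᵀ j) r| ≤ C := fun j r => by
    rcases (g j).sign_trichotomy with h | h | h <;> simp [h, hC0, hC r j]
  have hwalk : ((columnList g).map fun j => (g j).sign • Aᵀ j).sum = 0 := by
    rw [← mulVec_signedCount, signedCount_eq_self (count_columnList g), hg.2.1]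
  obtain ⟨L, hperm, hprefix⟩ :=
    (columnList g).exists_perm_abs_sum_take_le _ hC0 (fun j _ => hstep j) hwalk
  have hL : ∀ j, L.count j = (g j).natAbs := fun j =>
    (hperm.count_eq j).trans (count_columnList g j)
  let box : Finset (Fin m → ℤ) := Icc (fun _ => -(m * C)) fun _ => m * C
  have hmaps : Set.MapsTo (fun p => A *ᵥ signedCount g (L.take p)) (range L.length) box :=
      fun p _ => by
    simp only [box, coe_Icc, Set.mem_Icc, mulVec_signedCount]
    exact ⟨fun r => (abs_le.1 (hprefix p r)).1, fun r => (abs_le.1 (hprefix p r)).2⟩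
  have hinj : Set.InjOn (fun p => A *ᵥ signedCount g (L.take p)) (range L.length) := by
    intro a ha b hb heq
    by_contra hne
    rcases Nat.lt_or_gt_of_ne hne with h | h
    · exact hg.mulVec_signedCount_take_ne hL h (mem_range.1 hb) heq
    · exact hg.mulVec_signedCount_take_ne hL h (mem_range.1 ha) heq.symm
  have hcard := card_le_card_of_injOn _ hmaps hinj
  rw [card_range, Pi.card_Icc] at hcard
  rw [sum_abs_eq_length hL]
  have hbox : ∏ _r : Fin m, #(Icc (-(m * C)) (m * C)) = ((2 * (m : ℤ) * C + 1) ^ m).toNat := by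
    rw [prod_const, card_univ, Fintype.card_fin, Int.card_Icc,
      Int.toNat_pow_of_nonneg (by positivity)]
    ring_nf
  rw [hbox] at hcard
  exact (Nat.cast_le.2 hcard).trans_eq (Int.toNat_of_nonneg (by positivity))

end Graver

/-- Base bound: every Graver basis element `g` of `A` satisfies
`‖g‖₁ ≤ (2m‖A‖_∞ + 1)^m`. -/
theorem graver_one_norm_bound (m n : ℕ) (A : Matrix (Fin m) (Fin n) ℤ) (C : ℤ)
    (hC : ∀ i j, |A i j| ≤ C) (g : Fin n → ℤ) (hg : InGraver A g) :
    (∑ i, |g i|) ≤ (2 * (m : ℤ) * C + 1) ^ m := by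
  rcases Nat.eq_zero_or_pos m with rfl | hm
  · -- without rows, `0` bounds the entries as well, even if `C` is negative
    simpa using hg.sum_abs_le le_rfl fun i => i.elim0
  · obtain ⟨j, -⟩ := Function.ne_iff.1 hg.1
    exact hg.sum_abs_le ((abs_nonneg _).trans (hC ⟨0, hm⟩ j)) hC
end

section
/- Let f(x) = Σᵢ fᵢ(xᵢ) be a separable convex function on ℝⁿ, let x ∈ ℝⁿ, and let g₁,…,g_k ∈ ℝⁿ all be conformal to x, i.e., each gⱼ ⊑ x. Then for arbitrary nonnegative integers α₁,…,α_k: f(x + Σⱼ αⱼ gⱼ) − f(x) ≥ Σⱼ αⱼ (f(x + gⱼ) − f(x)). -/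
private lemma conv_superadd {φ : ℝ → ℝ} (hφ : ConvexOn ℝ Set.univ φ) (hφ0 : φ 0 = 0)
    {a b : ℝ} (ha : 0 ≤ a) (hb : 0 ≤ b) : φ a + φ b ≤ φ (a + b) := by
  rcases eq_or_lt_of_le (by linarith : (0:ℝ) ≤ a + b) with h | h
  · have ha0 : a = 0 := by linarith
    have hb0 : b = 0 := by linarith
    simp [ha0, hb0, hφ0]
  · set s := a + b with hs
    have hsne : s ≠ 0 := ne_of_gt h
    have h1 := hφ.2 (Set.mem_univ s) (Set.mem_univ (0:ℝ))
      (div_nonneg ha h.le) (div_nonneg hb h.le) (by field_simp; exact hs.symm)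
    have h2 := hφ.2 (Set.mem_univ s) (Set.mem_univ (0:ℝ))
      (div_nonneg hb h.le) (div_nonneg ha h.le) (by field_simp; ring)
    have e1 : (a/s) • s + (b/s) • (0:ℝ) = a := by simp only [smul_eq_mul, mul_zero, add_zero]; field_simp
    have e2 : (b/s) • s + (a/s) • (0:ℝ) = b := by simp only [smul_eq_mul, mul_zero, add_zero]; field_simp
    rw [e1] at h1
    rw [e2] at h2
    simp only [smul_eq_mul, hφ0, mul_zero, add_zero] at h1 h2
    have hsum : a/s + b/s = 1 := by field_simp; exact hs.symm
    have hkey : a/s * φ s + b/s * φ s = φ s := by rw [← add_mul, hsum, one_mul]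
    linarith

private lemma conv_nat_mul {φ : ℝ → ℝ} (hφ : ConvexOn ℝ Set.univ φ) (hφ0 : φ 0 = 0)
    {t : ℝ} (ht : 0 ≤ t) : ∀ m : ℕ, (m : ℝ) * φ t ≤ φ ((m : ℝ) * t) := by
  intro m
  induction m with
  | zero => simp [hφ0]
  | succ m ih =>
    have h := conv_superadd hφ hφ0 (mul_nonneg m.cast_nonneg ht) ht
    push_cast
    have : ((m:ℝ) + 1) * t = (m:ℝ) * t + t := by ring
    rw [this]
    nlinarith [h, ih]

private lemma conv_sum {k : ℕ} {φ : ℝ → ℝ} (hφ : ConvexOn ℝ Set.univ φ) (hφ0 : φ 0 = 0)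
    (t : Fin k → ℝ) (ht : ∀ j, 0 ≤ t j) (α : Fin k → ℕ) :
    ∑ j, (α j : ℝ) * φ (t j) ≤ φ (∑ j, (α j : ℝ) * t j) := by
  suffices H : ∀ s : Finset (Fin k),
      ∑ j ∈ s, (α j : ℝ) * φ (t j) ≤ φ (∑ j ∈ s, (α j : ℝ) * t j) from H Finset.univ
  intro s
  induction s using Finset.cons_induction with
  | empty => simp [hφ0]
  | cons a s has ih =>
    rw [Finset.sum_cons, Finset.sum_cons]
    have hS : 0 ≤ ∑ j ∈ s, (α j : ℝ) * t j :=
      Finset.sum_nonneg fun j _ => mul_nonneg (Nat.cast_nonneg _) (ht j)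
    have h1 := conv_superadd hφ hφ0 (mul_nonneg (Nat.cast_nonneg (α a)) (ht a)) hS
    have h2 := conv_nat_mul hφ hφ0 (ht a) (α a)
    linarith

/-- Separable convex superadditivity: for `f(x) = Σᵢ fᵢ(xᵢ)` separable convex and
vectors `g₁,…,g_k` conformal to `x`, and nonnegative integers `α₁,…,α_k`,
`f(x + Σⱼ αⱼ gⱼ) − f(x) ≥ Σⱼ αⱼ (f(x + gⱼ) − f(x))`. -/
theorem separable_convex_superadditivity (n k : ℕ)
    (f : (Fin n → ℝ) → ℝ) (fi : Fin n → ℝ → ℝ)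
    (hf : ∀ x, f x = ∑ i, fi i (x i))
    (hconv : ∀ i, ConvexOn ℝ Set.univ (fi i))
    (x : Fin n → ℝ) (g : Fin k → (Fin n → ℝ))
    (hg : ∀ j, ∀ i, 0 ≤ g j i * x i ∧ |g j i| ≤ |x i|)
    (α : Fin k → ℕ) :
    f (x + ∑ j, (α j : ℝ) • g j) - f x ≥ ∑ j, (α j : ℝ) * (f (x + g j) - f x) := by
  simp only [hf, Pi.add_apply, Finset.sum_apply, Pi.smul_apply, smul_eq_mul]
  rw [ge_iff_le]
  have hrhs : ∀ j : Fin k, (α j : ℝ) * ((∑ i, fi i (x i + g j i)) - ∑ i, fi i (x i))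
      = ∑ i, (α j : ℝ) * (fi i (x i + g j i) - fi i (x i)) := by
    intro j
    rw [← Finset.sum_sub_distrib, Finset.mul_sum]
  simp only [hrhs]
  rw [Finset.sum_comm, ← Finset.sum_sub_distrib]
  apply Finset.sum_le_sum
  intro i _
  -- per-coordinate inequality
  set φ : ℝ → ℝ := fun u => fi i (x i + u) - fi i (x i) with hφdef
  have hφ0 : φ 0 = 0 := by simp [hφdef]
  have hφ : ConvexOn ℝ Set.univ φ := by
    refine ⟨convex_univ, ?_⟩
    intro u _ v _ a b ha hb hab
    have hc := (hconv i).2 (Set.mem_univ (x i + u)) (Set.mem_univ (x i + v)) ha hb hab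
    simp only [smul_eq_mul] at hc ⊢
    have e : x i + (a * u + b * v) = a * (x i + u) + b * (x i + v) := by
      linear_combination (-(x i)) * hab
    have e2 : a * fi i (x i) + b * fi i (x i) = fi i (x i) := by
      rw [← add_mul, hab, one_mul]
    simp only [hφdef]
    rw [e]
    linarith [hc]
  have goal_eq : ∀ j, fi i (x i + g j i) - fi i (x i) = φ (g j i) := fun j => rfl
  have glhs : fi i (x i + ∑ j, (α j : ℝ) * g j i) - fi i (x i)
      = φ (∑ j, (α j : ℝ) * g j i) := rfl
  simp only [goal_eq, glhs]
  rcases le_or_gt 0 (x i) with hx | hx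
  · -- all g j i ≥ 0
    have ht : ∀ j, 0 ≤ g j i := by
      intro j
      rcases eq_or_lt_of_le hx with h0 | h0
      · have := (hg j i).2
        rw [← h0, abs_zero] at this
        have : g j i = 0 := abs_nonpos_iff.mp this
        simp [this]
      · nlinarith [(hg j i).1]
    exact conv_sum hφ hφ0 _ ht α
  · -- all g j i ≤ 0 ; use ψ u = φ (-u)
    have ht : ∀ j, 0 ≤ -(g j i) := by
      intro j
      have := (hg j i).1
      nlinarith
    set ψ : ℝ → ℝ := fun u => φ (-u) with hψdef
    have hψ0 : ψ 0 = 0 := by simp [hψdef, hφ0]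
    have hψ : ConvexOn ℝ Set.univ ψ := by
      refine ⟨convex_univ, ?_⟩
      intro u _ v _ a b ha hb hab
      have hc := hφ.2 (Set.mem_univ (-u)) (Set.mem_univ (-v)) ha hb hab
      simp only [smul_eq_mul, hψdef] at hc ⊢
      have : -(a * u + b * v) = a * -u + b * -v := by ring
      rw [this]
      exact hc
    have h := conv_sum hψ hψ0 (fun j => -(g j i)) ht α
    simp only [hψdef, neg_neg, mul_neg, Finset.sum_neg_distrib] at h
    exact h
end

section
/- Let f: ℝⁿ → ℝ be separable convex, let x ∈ ℝⁿ, and let y₁, y₂ ∈ ℝⁿ lie in the same orthant (i.e., (y₁)ᵢ(y₂)ᵢ ≥ 0 for all i). Then f(x + y₁ + y₂) − f(x + y₁) ≥ f(x + y₂) − f(x). -/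
theorem ConvexOn.map_add_add_map_add_le {𝕜 β : Type*} [Field 𝕜] [LinearOrder 𝕜]
    [IsStrictOrderedRing 𝕜] [AddCommGroup β] [PartialOrder β] [IsOrderedAddMonoid β]
    [Module 𝕜 β] {D : Set 𝕜} {g : 𝕜 → β} (hg : ConvexOn 𝕜 D g) {a u v : 𝕜}
    (ha : a ∈ D) (hb : a + u + v ∈ D) (huv : 0 ≤ u * v) :
    g (a + u) + g (a + v) ≤ g a + g (a + u + v) := by
  rcases eq_or_ne (u + v) 0 with hsum | hsum
  · obtain rfl : u = 0 := by nlinarith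
    obtain rfl : v = 0 := by simpa using hsum
    simp
  -- Same-sign increments make `a + u` and `a + v` convex combinations of `a` and `a + u + v`
  -- with swapped weights, so the two Jensen bounds add up to the claim.
  set l := u / (u + v)
  set m := v / (u + v)
  have hlm : l + m = 1 := by simp only [l, m]; field_simp
  have hprod : 0 ≤ l * m := by
    rw [div_mul_div_comm]; exact div_nonneg huv (mul_self_nonneg _)
  have hl : 0 ≤ l := by nlinarith
  have hm : 0 ≤ m := by nlinarith
  have hu : m • a + l • (a + u + v) = a + u := by
    simp only [smul_eq_mul, l, m]; field_simp; ring
  have hv : l • a + m • (a + u + v) = a + v := by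
    simp only [smul_eq_mul, l, m]; field_simp; ring
  calc g (a + u) + g (a + v)
      = g (m • a + l • (a + u + v)) + g (l • a + m • (a + u + v)) := by rw [hu, hv]
    _ ≤ (m • g a + l • g (a + u + v)) + (l • g a + m • g (a + u + v)) :=
        add_le_add (hg.2 ha hb hm hl (by rwa [add_comm])) (hg.2 ha hb hl hm hlm)
    _ = (l + m) • g a + (l + m) • g (a + u + v) := by simp only [add_smul]; abel
    _ = g a + g (a + u + v) := by rw [hlm, one_smul, one_smul]

/-- For a separable convex `f : ℝⁿ → ℝ` and vectors `y₁, y₂` lying in the same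
orthant, `f(x + y₁ + y₂) − f(x + y₁) ≥ f(x + y₂) − f(x)`. -/
theorem separable_convex_orthant_superadditivity (n : ℕ)
    (f : (Fin n → ℝ) → ℝ) (fi : Fin n → ℝ → ℝ)
    (hf : ∀ x, f x = ∑ i, fi i (x i))
    (hconv : ∀ i, ConvexOn ℝ Set.univ (fi i))
    (x y₁ y₂ : Fin n → ℝ) (h : ∀ i, 0 ≤ y₁ i * y₂ i) :
    f (x + y₁ + y₂) - f (x + y₁) ≥ f (x + y₂) - f x := by
  simp only [hf, Pi.add_apply]
  rw [ge_iff_le, sub_le_sub_iff, ← Finset.sum_add_distrib, ← Finset.sum_add_distrib]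
  refine Finset.sum_le_sum fun i _ => ?_
  linarith [(hconv i).map_add_add_map_add_le (a := x i) trivial trivial (h i)]
end

section
/- Let k ∈ ℕ^ℓ, K = (∏_{i=1}^ℓ (kᵢ+1)) − 1, and let P_K be the path on K vertices. Then P_K is a subgraph of the closure of the rooted tree F_k; in particular, the path on K vertices has a treedepth decomposition of topological height ℓ with level heights k₁,…,k_ℓ. -/
/-!
Write `F_k` as a spine of `k₁` vertices whose bottom vertex has `k₁ + 1` children, each the root
of a copy of `F_(k₂,…,k_ℓ)`. Given a path `P` in the closure of that smaller tree, walk along `P`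
in copy `0`, then visit the spine vertex at depth `0`, then `P` in copy `1`, the spine vertex at
depth `1`, …, the spine vertex at depth `k₁ - 1`, and finally `P` in copy `k₁`. Every spine vertex
is an ancestor of all vertices in the copies, so consecutive vertices remain comparable, and the
new path has `(k₁ + 1)|P| + k₁` vertices: the number `|P| + 1` is multiplied by `k₁ + 1`.
-/

/-- Rooted trees (vertices are nodes; a node's children are given by a list). -/
inductive RTree where
  | node : List RTree → RTree

/-- `IsPos t p` : `p` (a list of child indices) is a position (vertex) of `t`. -/
inductive IsPos : RTree → List ℕ → Prop
  | nil (t : RTree) : IsPos t []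
  | cons {cs : List RTree} {i : ℕ} {t : RTree} {p : List ℕ} :
      cs[i]? = some t → IsPos t p → IsPos (.node cs) (i :: p)

/-- `spine m cs` is a path of `m+1` vertices whose bottom vertex has the trees in
`cs` as its subtrees. -/
def spine : ℕ → List RTree → RTree
  | 0, cs => RTree.node cs
  | m + 1, cs => RTree.node [spine m cs]

/-- `buildF k₁ [k₂,…,k_ℓ]` is the maximal tree `F_k` with level heights
`(k₁,…,k_ℓ)` and out-degree `kᵢ+1` at the `i`-th non-degenerate vertex. -/
def buildF : ℕ → List ℕ → RTree
  | k₁, [] => spine (k₁ - 1) []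
  | k₁, k₂ :: rest => spine (k₁ - 1) (List.replicate (k₁ + 1) (buildF k₂ rest))

open List Relation

theorem replicate_prefix_replicate {α : Type*} (a : α) {i j : ℕ} (h : i ≤ j) :
    replicate i a <+: replicate j a :=
  prefix_replicate_iff.mpr (by simpa using h)

theorem replicate_prefix_replicate_append {α : Type*} (a : α) {i j : ℕ} (h : i ≤ j) (l : List α) :
    replicate i a <+: replicate j a ++ l :=
  (replicate_prefix_replicate a h).trans (prefix_append _ _)

theorem replicate_append_cons_ne_replicate {α : Type*} {a b : α} {l : List α} {i j : ℕ}
    (h : i ≤ j) : replicate j a ++ b :: l ≠ replicate i a := fun h' => by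
  have := congrArg length h'
  simp only [length_append, length_replicate, length_cons] at this
  omega

theorem isPos_spine_replicate_zero {cs : List RTree} :
    ∀ {m j : ℕ}, j ≤ m → IsPos (spine m cs) (replicate j 0)
  | _, 0, _ => .nil _
  | m + 1, j + 1, h => .cons rfl (isPos_spine_replicate_zero (by omega))

theorem isPos_spine_replicate_zero_append {cs : List RTree} {i : ℕ} {t : RTree} {p : List ℕ}
    (hi : cs[i]? = some t) (hp : IsPos t p) :
    ∀ m, IsPos (spine m cs) (replicate m 0 ++ i :: p)
  | 0 => .cons hi hp
  | m + 1 => .cons rfl (isPos_spine_replicate_zero_append hi hp m)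

/-- A position is a vertex and `p <+: q` says that `p` is an ancestor of `q`, so `L` lists distinct
vertices of `t`, consecutive ones being adjacent in the closure of `t`. -/
structure IsClosurePath (t : RTree) (L : List (List ℕ)) : Prop where
  nodup : L.Nodup
  isPos : ∀ p ∈ L, IsPos t p
  isChain : L.IsChain (SymmGen (· <+: ·))

theorem isClosurePath_spine (m : ℕ) (cs : List RTree) :
    IsClosurePath (spine m cs) ((range (m + 1)).map (replicate · 0)) where
  nodup := nodup_range.map (replicate_left_injective 0)
  isPos := by
    simp only [mem_map, mem_range, forall_exists_index, and_imp]
    rintro _ j hj rfl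
    exact isPos_spine_replicate_zero (by omega)
  isChain := by
    rw [isChain_map, isChain_range_succ]
    intro j _
    exact .of_rel (replicate_prefix_replicate 0 (Nat.le_succ j))

section Weave

variable (m : ℕ) (L : List (List ℕ))

def copyBelow (j : ℕ) : List (List ℕ) := L.map (replicate m 0 ++ j :: ·)

def weave : ℕ → List (List ℕ)
  | 0 => copyBelow m L 0
  | i + 1 => weave i ++ replicate i 0 :: copyBelow m L (i + 1)

variable {m L}

theorem length_weave (i : ℕ) : (weave m L i).length + 1 = (i + 1) * (L.length + 1) := by
  induction i with
  | zero => simp [weave, copyBelow]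
  | succ i ih => simp only [weave, copyBelow, length_append, length_cons, length_map]; grind

theorem mem_weave {i : ℕ} {x : List ℕ} :
    x ∈ weave m L i ↔
      (∃ j < i, x = replicate j 0) ∨ ∃ j ≤ i, ∃ q ∈ L, x = replicate m 0 ++ j :: q := by
  induction i with
  | zero => simp [weave, copyBelow, eq_comm]
  | succ i ih =>
    simp only [weave, copyBelow, mem_append, ih, mem_cons, mem_map]
    grind

theorem nodup_copyBelow (hL : L.Nodup) (j : ℕ) : (copyBelow m L j).Nodup :=
  hL.map fun _ _ h => by simpa using h

theorem isChain_copyBelow (hL : L.IsChain (SymmGen (· <+: ·))) (j : ℕ) :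
    (copyBelow m L j).IsChain (SymmGen (· <+: ·)) :=
  isChain_map_of_isChain _ (fun _ _ h => h.imp (by simp) (by simp)) hL

theorem nodup_weave (hL : L.Nodup) : ∀ {i}, i ≤ m + 1 → (weave m L i).Nodup
  | 0, _ => nodup_copyBelow hL 0
  | i + 1, hi => by
    refine nodup_append.mpr ⟨nodup_weave hL (by omega), ?_, ?_⟩
    · refine (nodup_copyBelow hL _).cons ?_
      simp only [copyBelow, mem_map, not_exists, not_and]
      exact fun q _ => replicate_append_cons_ne_replicate (by omega)
    · rintro x hx _ hx' rfl
      simp only [copyBelow, mem_cons, mem_map] at hx'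
      rcases mem_weave.mp hx with ⟨j, hj, rfl⟩ | ⟨j, hj, q, -, rfl⟩ <;>
        rcases hx' with h | ⟨q', -, h⟩
      · exact hj.ne (replicate_left_injective 0 h)
      · exact replicate_append_cons_ne_replicate (by omega) h
      · exact replicate_append_cons_ne_replicate (by omega) h
      · simp only [append_cancel_left_eq, cons.injEq] at h
        omega

theorem symmGen_prefix_replicate_of_mem_weave {i : ℕ} (hi : i ≤ m) {x : List ℕ}
    (hx : x ∈ weave m L i) : SymmGen (· <+: ·) x (replicate i 0) := by
  rcases mem_weave.mp hx with ⟨j, hj, rfl⟩ | ⟨j, -, q, -, rfl⟩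
  · exact .of_rel (replicate_prefix_replicate 0 hj.le)
  · exact .of_rel_symm (replicate_prefix_replicate_append 0 hi _)

theorem isChain_weave (hL : L.IsChain (SymmGen (· <+: ·))) :
    ∀ {i}, i ≤ m + 1 → (weave m L i).IsChain (SymmGen (· <+: ·))
  | 0, _ => isChain_copyBelow hL 0
  | i + 1, hi => by
    refine (isChain_weave hL (by omega)).append ((isChain_copyBelow hL _).cons ?_) ?_
    · simp only [copyBelow, head?_map, Option.mem_def, Option.map_eq_some_iff]
      rintro _ ⟨q, -, rfl⟩
      exact .of_rel (replicate_prefix_replicate_append 0 (by omega) _)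
    · intro x hx y hy
      simp only [head?_cons, Option.mem_some_iff] at hy
      exact hy ▸ symmGen_prefix_replicate_of_mem_weave (by omega) (mem_of_mem_getLast? hx)

theorem IsClosurePath.spine_replicate {t : RTree} (h : IsClosurePath t L) (m : ℕ) :
    IsClosurePath (spine m (replicate (m + 2) t)) (weave m L (m + 1)) where
  nodup := nodup_weave h.nodup le_rfl
  isPos x hx := by
    rcases mem_weave.mp hx with ⟨j, hj, rfl⟩ | ⟨j, hj, q, hq, rfl⟩
    · exact isPos_spine_replicate_zero (by omega)
    · exact isPos_spine_replicate_zero_append (by simp [getElem?_replicate]; omega) (h.isPos q hq) m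
  isChain := isChain_weave h.isChain le_rfl

end Weave

theorem exists_isClosurePath_buildF :
    ∀ (ks : List ℕ) {k : ℕ}, 1 ≤ k → (∀ j ∈ ks, 1 ≤ j) →
      ∃ L, IsClosurePath (buildF k ks) L ∧ L.length + 1 = (k + 1) * (ks.map (· + 1)).prod
  | [], _, hk, _ => by
    obtain ⟨m, rfl⟩ := Nat.exists_eq_add_of_le' hk
    exact ⟨_, isClosurePath_spine m [], by simp⟩
  | k₂ :: ks, _, hk, hks => by
    obtain ⟨m, rfl⟩ := Nat.exists_eq_add_of_le' hk
    obtain ⟨L, hL, hlen⟩ :=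
      exists_isClosurePath_buildF ks (hks k₂ mem_cons_self) fun j hj => hks j (mem_cons_of_mem _ hj)
    refine ⟨_, hL.spine_replicate m, ?_⟩
    rw [length_weave, hlen, map_cons, prod_cons]

/-- For `K = (∏ᵢ (kᵢ+1)) − 1`, the path on `K` vertices is a subgraph of the
closure of `F_k`: there is an injective labeling of the path vertices by vertices
of `F_k` such that consecutive path vertices are in ancestor–descendant relation
(one position is a prefix of the other). -/
theorem path_subgraph_closure_maximal_tree (k : ℕ) (ks : List ℕ) (hk : 1 ≤ k)
    (hks : ∀ j ∈ ks, 1 ≤ j) (K : ℕ)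
    (hK : K + 1 = (k + 1) * (ks.map (· + 1)).prod) :
    ∃ label : Fin K → List ℕ, Function.Injective label ∧
      (∀ i, IsPos (buildF k ks) (label i)) ∧
      ∀ i j : Fin K, (i : ℕ) + 1 = (j : ℕ) →
        (label i <+: label j ∨ label j <+: label i) := by
  obtain ⟨L, hL, hlen⟩ := exists_isClosurePath_buildF ks hk hks
  obtain rfl : L.length = K := by omega
  refine ⟨L.get, hL.nodup.injective_get, fun i => hL.isPos _ (L.get_mem i), ?_⟩
  rintro ⟨i, -⟩ ⟨j, hj⟩ (rfl : i + 1 = j)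
  exact isChain_iff_getElem.mp hL.isChain i hj
end

section
/- For each n ≥ 2 there exists a matrix A ∈ ℤ^{(n−1)×n} with ‖A‖_∞ = 2, such that both the primal graph G_P(A) and the dual graph G_D(A) have treewidth 1, yet the Graver basis of A contains an element of ℓ_∞-norm at least 2^{n−1}. Concretely, A is the matrix with rows (0,…,0,2,−1,0,…,0) (2 in column i, −1 in column i+1), whose kernel vectors x satisfy x_{i+1} = 2x_i, so h = (1,2,4,…,2^{n−1}) is a ⊑-minimal nonzero kernel element. -/
/-- The primal graph of `A`: vertices are columns, two columns adjacent if some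
row is nonzero in both. -/
def primalGraph {m n : ℕ} (A : Matrix (Fin m) (Fin n) ℤ) : SimpleGraph (Fin n) where
  Adj i j := i ≠ j ∧ ∃ r, A r i ≠ 0 ∧ A r j ≠ 0
  symm := ⟨by rintro i j ⟨hij, r, h1, h2⟩; exact ⟨hij.symm, r, h2, h1⟩⟩
  loopless := ⟨by rintro i ⟨hii, -⟩; exact hii rfl⟩

/-- The dual graph of `A` is the primal graph of its transpose. -/
def dualGraph {m n : ℕ} (A : Matrix (Fin m) (Fin n) ℤ) : SimpleGraph (Fin m) :=
  primalGraph (Matrix.transpose A)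

/-!
The kernel of the doubling matrix, with rows `2 e_i - e_{i+1}`, is the line spanned by
`(1, 2, 4, …, 2^m)`. Since this generator has a coordinate equal to `1`, no other nonzero kernel
element is conformal to it, so it lies in the Graver basis. Every row and every column of the matrix
meets only two consecutive indices, so both graphs are subgraphs of a path and hence acyclic.
-/

namespace SimpleGraph

variable {V : Type*} {G : SimpleGraph V}

lemma Reachable.iff_of_forall_adj_iff {P : V → Prop} (h : ∀ a b, G.Adj a b → (P a ↔ P b))
    {u v : V} (huv : G.Reachable u v) : P u ↔ P v := by
  obtain ⟨w⟩ := huv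
  induction w with
  | nil => exact Iff.rfl
  | cons ha _ ih => exact (h _ _ ha).trans ih

/-- Deleting the edge `v — v + 1` separates `{x | x ≤ v}` from its complement. -/
lemma not_reachable_pathGraph_deleteEdge {n : ℕ} {v w : Fin n} (hvw : (v : ℕ) + 1 = w) :
    ¬ ((pathGraph n).deleteEdges {s(v, w)}).Reachable v w := by
  intro hr
  have hclosed : ∀ a b, ((pathGraph n).deleteEdges {s(v, w)}).Adj a b →
      ((a : ℕ) ≤ v ↔ (b : ℕ) ≤ v) := by
    intro a b hab
    simp only [deleteEdges_adj, pathGraph_adj, Set.mem_singleton_iff, Sym2.eq_iff] at hab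
    have h1 : ¬ ((a : ℕ) = v ∧ (b : ℕ) = w) := fun ⟨h1, h2⟩ =>
      hab.2 (Or.inl ⟨Fin.ext h1, Fin.ext h2⟩)
    have h2 : ¬ ((a : ℕ) = w ∧ (b : ℕ) = v) := fun ⟨h1, h2⟩ =>
      hab.2 (Or.inr ⟨Fin.ext h1, Fin.ext h2⟩)
    omega
  have := hr.iff_of_forall_adj_iff hclosed
  omega

theorem pathGraph_isAcyclic (n : ℕ) : (pathGraph n).IsAcyclic := by
  refine isAcyclic_iff_forall_adj_isBridge.mpr fun v w hvw => isBridge_iff.mpr ?_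
  rcases pathGraph_adj.mp hvw with h | h
  · exact not_reachable_pathGraph_deleteEdge h
  · rw [Sym2.eq_swap]
    exact fun hr => not_reachable_pathGraph_deleteEdge h hr.symm

end SimpleGraph

open Matrix

/-- A conformal kernel element `c • g` has `0 ≤ c ≤ 1`, read off at the unit coordinate. -/
lemma inGraver_of_forall_mulVec_eq_zero_eq_smul {m n : ℕ} {A : Matrix (Fin m) (Fin n) ℤ}
    {g : Fin n → ℤ} (hg : A *ᵥ g = 0) {i : Fin n} (hgi : |g i| = 1)
    (hker : ∀ x, A *ᵥ x = 0 → ∃ c : ℤ, x = c • g) : InGraver A g := by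
  refine ⟨fun h0 => by simp [h0] at hgi, hg, fun x hx0 hx hconf => ?_⟩
  obtain ⟨c, rfl⟩ := hker x hx
  obtain ⟨hsign, habs⟩ := hconf i
  have hsq : g i * g i = 1 := by rw [← abs_mul_abs_self, hgi, one_mul]
  have hc0 : c ≠ 0 := by rintro rfl; exact hx0 (zero_smul ℤ g)
  simp only [Pi.smul_apply, smul_eq_mul, abs_mul, hgi, mul_one] at hsign habs
  have hc1 : c = 1 := by
    rw [mul_assoc, hsq, mul_one] at hsign
    rw [abs_le] at habs
    omega
  rw [hc1, one_smul]

def doublingMatrix (m : ℕ) : Matrix (Fin m) (Fin (m + 1)) ℤ :=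
  of fun i j => if j = i.castSucc then 2 else if j = i.succ then -1 else 0

lemma doublingMatrix_apply {m : ℕ} (i : Fin m) (j : Fin (m + 1)) :
    doublingMatrix m i j = if j = i.castSucc then 2 else if j = i.succ then -1 else 0 :=
  rfl

lemma doublingMatrix_ne_zero_iff {m : ℕ} {i : Fin m} {j : Fin (m + 1)} :
    doublingMatrix m i j ≠ 0 ↔ j = i.castSucc ∨ j = i.succ := by
  rw [doublingMatrix_apply]
  split_ifs <;> simp_all [i.castSucc_lt_succ.ne]

lemma abs_doublingMatrix_le {m : ℕ} (i : Fin m) (j : Fin (m + 1)) :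
    |doublingMatrix m i j| ≤ 2 := by
  rw [doublingMatrix_apply]
  split_ifs <;> norm_num

lemma doublingMatrix_mulVec {m : ℕ} (x : Fin (m + 1) → ℤ) (i : Fin m) :
    (doublingMatrix m *ᵥ x) i = 2 * x i.castSucc - x i.succ := by
  have hterm : ∀ j, doublingMatrix m i j * x j =
      Pi.single (M := fun _ => ℤ) i.castSucc (2 * x i.castSucc) j -
        Pi.single (M := fun _ => ℤ) i.succ (x i.succ) j := by
    intro j
    rw [doublingMatrix_apply]
    split_ifs with h1 h2 <;> subst_vars <;>
      simp [i.castSucc_lt_succ.ne, i.castSucc_lt_succ.ne', *]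
  simp [mulVec, dotProduct, hterm, Finset.sum_sub_distrib]

lemma doublingMatrix_mulVec_eq_zero_iff {m : ℕ} {x : Fin (m + 1) → ℤ} :
    doublingMatrix m *ᵥ x = 0 ↔ ∀ i : Fin m, x i.succ = 2 * x i.castSucc := by
  rw [funext_iff]
  exact forall_congr' fun i => by rw [doublingMatrix_mulVec, Pi.zero_apply, sub_eq_zero, eq_comm]

def powersOfTwo (n : ℕ) : Fin n → ℤ := fun i => 2 ^ (i : ℕ)

lemma eq_smul_powersOfTwo_of_forall_succ_eq {m : ℕ} {x : Fin (m + 1) → ℤ}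
    (hx : ∀ i : Fin m, x i.succ = 2 * x i.castSucc) : x = x 0 • powersOfTwo (m + 1) := by
  funext i
  induction i using Fin.induction with
  | zero => simp [powersOfTwo]
  | succ i ih =>
    rw [hx i, ih]
    simp only [Pi.smul_apply, smul_eq_mul, powersOfTwo, Fin.val_succ, Fin.val_castSucc, pow_succ]
    ring

lemma inGraver_doublingMatrix_powersOfTwo (m : ℕ) :
    InGraver (doublingMatrix m) (powersOfTwo (m + 1)) := by
  refine inGraver_of_forall_mulVec_eq_zero_eq_smul (i := 0) ?_ (by simp [powersOfTwo])
    fun x hx =>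
      ⟨x 0, eq_smul_powersOfTwo_of_forall_succ_eq (doublingMatrix_mulVec_eq_zero_iff.mp hx)⟩
  rw [doublingMatrix_mulVec_eq_zero_iff]
  intro i
  simp [powersOfTwo, pow_succ, mul_comm]

lemma primalGraph_doublingMatrix_le (m : ℕ) :
    primalGraph (doublingMatrix m) ≤ SimpleGraph.pathGraph (m + 1) := by
  rintro u v ⟨huv, r, hu, hv⟩
  rw [doublingMatrix_ne_zero_iff] at hu hv
  rw [SimpleGraph.pathGraph_adj]
  have := Fin.val_ne_of_ne huv
  rcases hu with rfl | rfl <;> rcases hv with rfl | rfl <;> simp_all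

lemma dualGraph_doublingMatrix_le (m : ℕ) :
    dualGraph (doublingMatrix m) ≤ SimpleGraph.pathGraph m := by
  rintro u v ⟨huv, c, hu, hv⟩
  rw [transpose_apply, doublingMatrix_ne_zero_iff] at hu hv
  rw [SimpleGraph.pathGraph_adj]
  have := Fin.val_ne_of_ne huv
  rcases hu with rfl | rfl <;> rcases hv with h | h <;>
    simp [Fin.ext_iff] at h <;> omega

/-- For each `m ≥ 1` there is `A ∈ ℤ^{m×(m+1)}` with `‖A‖_∞ = 2`, both primal
and dual graph acyclic (treewidth 1), whose kernel vectors satisfy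
`x_{i+1} = 2 x_i`, so that the Graver basis contains an element of
`ℓ_∞`-norm at least `2^m`. -/
theorem constant_treewidth_large_graver (m : ℕ) (hm : 1 ≤ m) :
    ∃ A : Matrix (Fin m) (Fin (m + 1)) ℤ,
      (∀ i j, A i j =
        if j = Fin.castSucc i then 2 else if j = Fin.succ i then -1 else 0) ∧
      (∀ i j, |A i j| ≤ 2) ∧ (∃ i j, |A i j| = 2) ∧
      (primalGraph A).IsAcyclic ∧ (dualGraph A).IsAcyclic ∧
      (∀ x : Fin (m + 1) → ℤ, A.mulVec x = 0 →
        ∀ i : Fin m, x (Fin.succ i) = 2 * x (Fin.castSucc i)) ∧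
      ∃ hvec : Fin (m + 1) → ℤ, InGraver A hvec ∧ ∃ i, (2 : ℤ) ^ m ≤ |hvec i| := by
  let i₀ : Fin m := ⟨0, hm⟩
  refine ⟨doublingMatrix m, doublingMatrix_apply, abs_doublingMatrix_le,
    ⟨i₀, i₀.castSucc, by simp [doublingMatrix_apply]⟩,
    (SimpleGraph.pathGraph_isAcyclic _).anti (primalGraph_doublingMatrix_le m),
    (SimpleGraph.pathGraph_isAcyclic _).anti (dualGraph_doublingMatrix_le m),
    fun x => doublingMatrix_mulVec_eq_zero_iff.mp,
    _, inGraver_doublingMatrix_powersOfTwo m, Fin.last m, by simp [powersOfTwo]⟩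
end

section
/- Let A ∈ ℤ^{m×n}, ε > 0, and let p ∈ ℕ satisfy (1/p)·n·g_∞(A) ≤ ε. If ẑ is an optimum of the integer program min{f(z/p) : Az = p·b, p·l ≤ z ≤ p·u, z ∈ ℤⁿ}, then (1/p)·ẑ is within ℓ_∞-distance ε of some optimum of the continuous relaxation min{f(x) : Ax = b, l ≤ x ≤ u, x ∈ ℝⁿ}. -/
/-- Feasibility for the continuous relaxation `Ax = b, l ≤ x ≤ u, x ∈ ℝⁿ`. -/
def RelFeas {m n : ℕ} (A : Matrix (Fin m) (Fin n) ℤ) (b : Fin m → ℤ)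
    (l u : Fin n → ℤ) (x : Fin n → ℝ) : Prop :=
  ((A.map (Int.cast : ℤ → ℝ)).mulVec x = fun i => (b i : ℝ)) ∧
    ∀ i, (l i : ℝ) ≤ x i ∧ x i ≤ (u i : ℝ)

/-- Optimality for the continuous relaxation with objective `f`. -/
def RelOpt {m n : ℕ} (A : Matrix (Fin m) (Fin n) ℤ) (b : Fin m → ℤ)
    (l u : Fin n → ℤ) (f : (Fin n → ℝ) → ℝ) (x : Fin n → ℝ) : Prop :=
  RelFeas A b l u x ∧ ∀ y, RelFeas A b l u y → f x ≤ f y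

/-- Feasibility for the integer program `Ax = b, l ≤ x ≤ u, x ∈ ℤⁿ`. -/
def IntFeas {m n : ℕ} (A : Matrix (Fin m) (Fin n) ℤ) (b : Fin m → ℤ)
    (l u : Fin n → ℤ) (x : Fin n → ℤ) : Prop :=
  A.mulVec x = b ∧ ∀ i, l i ≤ x i ∧ x i ≤ u i

/-- Optimality for the integer program with objective `F` (evaluated on casts). -/
def IntOpt {m n : ℕ} (A : Matrix (Fin m) (Fin n) ℤ) (b : Fin m → ℤ)
    (l u : Fin n → ℤ) (F : (Fin n → ℝ) → ℝ) (x : Fin n → ℤ) : Prop :=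
  IntFeas A b l u x ∧
    ∀ y, IntFeas A b l u y → F (fun i => (x i : ℝ)) ≤ F (fun i => (y i : ℝ))

/-!
Let `x` be an optimum of the relaxation and `z` an optimal integer point. The difference `x - z`
lies in the real kernel of `A`, so it is a nonnegative combination `∑ λⱼ gⱼ` of at most `n` Graver
elements lying in its orthant (a real kernel vector has an integral one with the same sign
pattern, below which a Graver element sits conformally). Rounding the coefficients down splits
`x - z = d + r` with `d = ∑ ⌊λⱼ⌋ gⱼ` integral and `r = ∑ fract λⱼ • gⱼ` of sup-norm at most
`n·g_∞(A)`, both coordinatewise between `0` and `x - z`. Hence `z + d` is integer feasible,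
`z + r` is feasible, and separable convexity gives `f (z + d) + f (z + r) ≤ f x + f z`, so
optimality of `z` makes `z + r` an optimum of the relaxation close to `z`. Applying this to the
program scaled by `p` and dividing by `p` turns the bound `n·g_∞(A)` into `n·g_∞(A)/p ≤ ε`.
-/

open Finset

section RationalApproximation

variable {ι κ : Type*} [Fintype ι]

theorem Matrix.map_intCast_mulVec {R : Type*} [Ring R] (A : Matrix κ ι ℤ) (v : ι → ℤ) :
    (A.map (Int.cast : ℤ → R)).mulVec (fun i => (v i : R)) = fun j => (A.mulVec v j : R) :=
  funext fun j => (RingHom.map_mulVec (Int.castRingHom R) A v j).symm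

theorem exists_rat_expansion (y : ι → ℝ) :
    ∃ (k : ℕ) (b : Fin k → ℝ) (q : Fin k → ι → ℚ), (∀ i, y i = ∑ t, b t * q t i) ∧
      ∀ a : ι → ℚ, (fun i => (a i : ℝ)) ⬝ᵥ y = 0 → ∀ t, a ⬝ᵥ q t = 0 := by
  -- Expand `y` in a `ℚ`-basis `b` of the `ℚ`-span of its entries.
  set V := Submodule.span ℚ (Set.range y)
  have : FiniteDimensional ℚ V := FiniteDimensional.span_of_finite ℚ (Set.finite_range y)
  let B := Module.finBasis ℚ V
  let yV : ι → V := fun i => ⟨y i, Submodule.subset_span ⟨i, rfl⟩⟩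
  have hcoe : ∀ (c : ℚ) (v : V), ((c • v : V) : ℝ) = c * v := fun c v => Rat.smul_def c (v : ℝ)
  refine ⟨_, fun t => B t, fun t i => B.repr (yV i) t, fun i => ?_, fun a ha t => ?_⟩
  · conv_lhs => rw [show y i = (yV i : ℝ) from rfl, ← B.sum_repr (yV i)]
    simp only [Submodule.coe_sum, hcoe]
    exact Finset.sum_congr rfl fun t _ => mul_comm _ _
  · have hzero : ∑ i, a i • yV i = 0 := Subtype.ext <| by
      simpa only [dotProduct, Submodule.coe_sum, hcoe, ZeroMemClass.coe_zero] using ha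
    simpa only [dotProduct, map_sum, map_smul, Finsupp.coe_finsetSum, Finsupp.coe_smul,
      Finset.sum_apply, Pi.smul_apply, smul_eq_mul, map_zero, Finsupp.zero_apply]
      using congrArg (B.repr · t) hzero

theorem exists_pos_nat_mul_eq_intCast (w : ι → ℚ) :
    ∃ d : ℕ, 0 < d ∧ ∃ g : ι → ℤ, ∀ i, (g i : ℚ) = d * w i := by
  refine ⟨∏ i, (w i).den, Finset.prod_pos fun i _ => (w i).pos, ?_⟩
  have hdvd : ∀ i, (w i).den ∣ ∏ i, (w i).den := fun i => Finset.dvd_prod_of_mem _ (mem_univ i)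
  choose c hc using hdvd
  refine ⟨fun i => (w i).num * c i, fun i => ?_⟩
  rw [hc i, Int.cast_mul, ← Rat.mul_den_eq_num]
  push_cast
  ring

theorem SignType.eq_of_mul_eq_one {s t : SignType} (h : s * t = 1) : s = t := by
  revert s t; decide

theorem sign_eq_sign_of_mul_pos {α : Type*} [Ring α] [LinearOrder α] [IsStrictOrderedRing α]
    {a b : α} (h : 0 < a * b) : SignType.sign a = SignType.sign b :=
  SignType.eq_of_mul_eq_one <| by rw [← sign_mul, sign_pos h]

theorem exists_rat_mulVec_eq_zero_sign_eq (A : Matrix κ ι ℚ) (y : ι → ℝ)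
    (hy : (A.map (Rat.cast : ℚ → ℝ)).mulVec y = 0) :
    ∃ w : ι → ℚ, A.mulVec w = 0 ∧ ∀ i, SignType.sign (w i : ℝ) = SignType.sign (y i) := by
  classical
  obtain ⟨k, b, q, hyb, hq⟩ := exists_rat_expansion y
  -- Every `∑ t, r t • q t` lies in the kernel; for `r` close to `b` it has the signs of `y`.
  set U : Set (Fin k → ℝ) := {r | ∀ i, y i ≠ 0 → 0 < (∑ t, r t * q t i) * y i}
  have hU : IsOpen U := by
    simp only [U, Set.ofPred_forall]
    exact isOpen_iInter_of_finite fun i => isOpen_iInter_of_finite fun _ =>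
      isOpen_lt continuous_const (by fun_prop)
  have hbU : b ∈ U := fun i hi => by rw [← hyb i]; exact mul_self_pos.2 hi
  obtain ⟨r, hr⟩ := (DenseRange.piMap fun _ => Rat.denseRange_cast).exists_mem_open hU ⟨b, hbU⟩
  have hAq : ∀ t, A.mulVec (q t) = 0 := fun t => funext fun j =>
    hq (A j) (by simpa [Matrix.mulVec] using congrFun hy j) t
  refine ⟨∑ t, r t • q t, by simp [Matrix.mulVec_sum, Matrix.mulVec_smul, hAq], fun i => ?_⟩
  by_cases hyi : y i = 0
  · have hqi : ∀ t, q t i = 0 := fun t => by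
      have hsingle := hq (Pi.single i 1)
        (by simp [dotProduct, Pi.single_apply, apply_ite (Rat.cast : ℚ → ℝ), hyi]) t
      simpa using hsingle
    simp [hqi, hyi]
  · simpa using sign_eq_sign_of_mul_pos (hr i hyi)

theorem exists_int_mulVec_eq_zero_sign_eq (A : Matrix κ ι ℤ) (y : ι → ℝ)
    (hy : (A.map (Int.cast : ℤ → ℝ)).mulVec y = 0) :
    ∃ g : ι → ℤ, A.mulVec g = 0 ∧ ∀ i, SignType.sign (g i : ℝ) = SignType.sign (y i) := by
  have hAQ : (A.map (Int.cast : ℤ → ℚ)).map (Rat.cast : ℚ → ℝ) = A.map Int.cast := by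
    ext; simp
  obtain ⟨w, hw0, hw⟩ := exists_rat_mulVec_eq_zero_sign_eq (A.map Int.cast) y (hAQ ▸ hy)
  obtain ⟨d, hd, g, hg⟩ := exists_pos_nat_mul_eq_intCast w
  refine ⟨g, funext fun j => Int.cast_injective (α := ℚ) ?_, fun i => ?_⟩
  · have hgw : (Int.cast ∘ g : ι → ℚ) = (d : ℚ) • w := funext hg
    rw [← eq_intCast (Int.castRingHom ℚ), RingHom.map_mulVec, Int.coe_castRingHom, hgw,
      Matrix.mulVec_smul, hw0]
    simp
  · have hgi : (g i : ℝ) = d * (w i : ℝ) := by exact_mod_cast congrArg (Rat.cast : ℚ → ℝ) (hg i)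
    rw [hgi, sign_mul, sign_pos (by exact_mod_cast hd), one_mul, hw]

end RationalApproximation

section Graver

variable {m n : ℕ}

theorem ConformalTo.refl (x : Fin n → ℤ) : ConformalTo x x :=
  fun _ => ⟨mul_self_nonneg _, le_rfl⟩

theorem ConformalTo.trans {x y z : Fin n → ℤ} (hxy : ConformalTo x y) (hyz : ConformalTo y z) :
    ConformalTo x z := by
  intro i
  obtain ⟨hxy₁, hxy₂⟩ := hxy i
  obtain ⟨hyz₁, hyz₂⟩ := hyz i
  refine ⟨?_, hxy₂.trans hyz₂⟩
  rcases eq_or_ne (y i) 0 with hy | hy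
  · simp [abs_nonpos_iff.1 (hy ▸ hxy₂ : |x i| ≤ |0|)]
  · refine nonneg_of_mul_nonneg_left (b := y i * y i) ?_ (mul_self_pos.2 hy)
    nlinarith

theorem ConformalTo.eq_of_sum_natAbs_le {x y : Fin n → ℤ} (hxy : ConformalTo x y)
    (h : ∑ i, (y i).natAbs ≤ ∑ i, (x i).natAbs) : x = y := by
  have hle : ∀ i ∈ univ, (x i).natAbs ≤ (y i).natAbs := fun i _ => by
    have := (hxy i).2
    rw [Int.abs_eq_natAbs, Int.abs_eq_natAbs] at this
    exact_mod_cast this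
  have heq := (Finset.sum_eq_sum_iff_of_le hle).1 (le_antisymm (Finset.sum_le_sum hle) h)
  funext i
  rcases Int.natAbs_eq_natAbs_iff.1 (heq i (mem_univ i)) with h | h
  · exact h
  · have := (hxy i).1
    rw [h] at this ⊢
    nlinarith

theorem exists_inGraver_conformalTo (A : Matrix (Fin m) (Fin n) ℤ) {g : Fin n → ℤ} (hg : g ≠ 0)
    (hAg : A.mulVec g = 0) : ∃ h, InGraver A h ∧ ConformalTo h g := by
  obtain ⟨h, ⟨hh0, hAh, hhg⟩, hmin⟩ :=
    (measure fun h : Fin n → ℤ => ∑ i, (h i).natAbs).wf.has_min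
      {h | h ≠ 0 ∧ A.mulVec h = 0 ∧ ConformalTo h g} ⟨g, hg, hAg, .refl g⟩
  refine ⟨h, ⟨hh0, hAh, fun h' hh'0 hAh' hh'h => ?_⟩, hhg⟩
  exact hh'h.eq_of_sum_natAbs_le (not_lt.1 (hmin h' ⟨hh'0, hAh', hh'h.trans hhg⟩))

end Graver

section Orthant

variable {ι : Type*}

def InOrthant (x y : ι → ℝ) : Prop :=
  ∀ i, (0 ≤ y i → 0 ≤ x i) ∧ (y i ≤ 0 → x i ≤ 0)

theorem InOrthant.trans {x y z : ι → ℝ} (hxy : InOrthant x y) (hyz : InOrthant y z) :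
    InOrthant x z :=
  fun i => ⟨fun h => (hxy i).1 ((hyz i).1 h), fun h => (hxy i).2 ((hyz i).2 h)⟩

theorem InOrthant.eq_zero {x y : ι → ℝ} (h : InOrthant x y) {i : ι} (hi : y i = 0) : x i = 0 :=
  le_antisymm ((h i).2 hi.le) ((h i).1 hi.ge)

theorem InOrthant.div_pos {x y : ι → ℝ} (h : InOrthant x y) {i : ι} (hi : x i ≠ 0) :
    0 < y i / x i := by
  rcases hi.lt_or_gt with hneg | hpos
  · exact div_pos_of_neg_of_neg (not_le.1 fun hy => hneg.not_ge ((h i).1 hy)) hneg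
  · exact _root_.div_pos (not_le.1 fun hy => hpos.not_ge ((h i).2 hy)) hpos

theorem inOrthant_of_sign_eq {x y : ι → ℝ} (h : ∀ i, SignType.sign (x i) = SignType.sign (y i)) :
    InOrthant x y := fun i =>
  ⟨fun hy => sign_nonneg_iff.1 (h i ▸ sign_nonneg_iff.2 hy),
    fun hy => sign_nonpos_iff.1 (h i ▸ sign_nonpos_iff.2 hy)⟩

theorem ConformalTo.inOrthant {n : ℕ} {x y : Fin n → ℤ} (h : ConformalTo x y) :
    InOrthant (fun i => (x i : ℝ)) (fun i => (y i : ℝ)) := by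
  intro i
  obtain ⟨hxy, habs⟩ := h i
  suffices (0 ≤ y i → 0 ≤ x i) ∧ (y i ≤ 0 → x i ≤ 0) by
    simpa only [Int.cast_nonneg_iff, Int.cast_nonpos] using this
  rcases lt_trichotomy (y i) 0 with hy | hy | hy
  · exact ⟨fun h => absurd h hy.not_ge, fun _ => by nlinarith⟩
  · simp [abs_nonpos_iff.1 (hy ▸ habs : |x i| ≤ |0|)]
  · exact ⟨fun _ => by nlinarith, fun h => absurd h hy.not_ge⟩

theorem InOrthant.exists_sub_smul_eq_zero [Fintype ι] {g y : ι → ℝ}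
    (hg : InOrthant g y) (hg0 : g ≠ 0) :
    ∃ c : ℝ, 0 ≤ c ∧ InOrthant (y - c • g) y ∧ ∃ i, y i ≠ 0 ∧ (y - c • g) i = 0 := by
  classical
  obtain ⟨i₁, hi₁⟩ := Function.ne_iff.1 hg0
  obtain ⟨i₀, hi₀, hmin⟩ := (univ.filter (g · ≠ 0)).exists_min_image (fun i => y i / g i)
    ⟨i₁, by simpa using hi₁⟩
  simp only [mem_filter, mem_univ, true_and] at hi₀ hmin
  have hc := hg.div_pos hi₀
  refine ⟨y i₀ / g i₀, hc.le, fun i => ?_, i₀, fun h => by simp [h] at hc, by simp [hi₀]⟩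
  by_cases hgi : g i = 0
  · simp [hgi]
  · have hyi : y i - y i₀ / g i₀ * g i = (y i / g i - y i₀ / g i₀) * g i := by
      field_simp
    have hratio := sub_nonneg.2 (hmin i hgi)
    simp only [Pi.sub_apply, Pi.smul_apply, smul_eq_mul, hyi]
    exact ⟨fun hy => mul_nonneg hratio ((hg i).1 hy),
      fun hy => mul_nonpos_of_nonneg_of_nonpos hratio ((hg i).2 hy)⟩

theorem sum_mul_mem_uIcc {κ : Type*} [Fintype κ] {c μ : κ → ℝ} {g : κ → ι → ℝ} {y : ι → ℝ}
    (hg : ∀ j, InOrthant (g j) y) (hy : ∀ i, y i = ∑ j, c j * g j i) (hμ : ∀ j, 0 ≤ μ j)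
    (hμc : ∀ j, μ j ≤ c j) (i : ι) : ∑ j, μ j * g j i ∈ Set.uIcc 0 (y i) := by
  rcases le_total 0 (y i) with hyi | hyi
  · rw [Set.uIcc_of_le hyi, hy i]
    have hgi := fun j => (hg j i).1 hyi
    exact ⟨sum_nonneg fun j _ => mul_nonneg (hμ j) (hgi j),
      sum_le_sum fun j _ => mul_le_mul_of_nonneg_right (hμc j) (hgi j)⟩
  · rw [Set.uIcc_of_ge hyi, hy i]
    have hgi := fun j => (hg j i).2 hyi
    exact ⟨sum_le_sum fun j _ => mul_le_mul_of_nonpos_right (hμc j) (hgi j),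
      sum_nonpos fun j _ => mul_nonpos_of_nonneg_of_nonpos (hμ j) (hgi j)⟩

end Orthant

section Decomposition

variable {m n : ℕ}

theorem exists_inGraver_inOrthant (A : Matrix (Fin m) (Fin n) ℤ) {y : Fin n → ℝ}
    (hy : (A.map (Int.cast : ℤ → ℝ)).mulVec y = 0) (hy0 : y ≠ 0) :
    ∃ g, InGraver A g ∧ InOrthant (fun i => (g i : ℝ)) y := by
  obtain ⟨g, hAg, hsign⟩ := exists_int_mulVec_eq_zero_sign_eq A y hy
  have hg0 : g ≠ 0 := by
    rintro rfl
    obtain ⟨i, hi⟩ := Function.ne_iff.1 hy0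
    exact hi (sign_eq_zero_iff.1 (by simpa using (hsign i).symm))
  obtain ⟨h, hGraver, hhg⟩ := exists_inGraver_conformalTo A hg0 hAg
  exact ⟨h, hGraver, hhg.inOrthant.trans (inOrthant_of_sign_eq hsign)⟩

open Classical in
theorem exists_sum_inGraver (A : Matrix (Fin m) (Fin n) ℤ) {y : Fin n → ℝ}
    (hy : (A.map (Int.cast : ℤ → ℝ)).mulVec y = 0) :
    ∃ (k : ℕ) (c : Fin k → ℝ) (g : Fin k → Fin n → ℤ), k ≤ #{i | y i ≠ 0} ∧ (∀ j, 0 ≤ c j) ∧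
      (∀ j, InGraver A (g j)) ∧ (∀ j, InOrthant (fun i => (g j i : ℝ)) y) ∧
      y = ∑ j, c j • fun i => (g j i : ℝ) := by
  induction hN : #{i | y i ≠ 0} using Nat.strong_induction_on generalizing y with
  | _ N ih =>
  rcases eq_or_ne y 0 with rfl | hy0
  · exact ⟨0, Fin.elim0, Fin.elim0, Nat.zero_le _, nofun, nofun, nofun, by simp⟩
  obtain ⟨g, hGraver, hgy⟩ := exists_inGraver_inOrthant A hy hy0
  have hg0 : (fun i => (g i : ℝ)) ≠ 0 := fun h => hGraver.1 (funext fun i => by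
    simpa using congrFun h i)
  obtain ⟨c, hc, hy'y, i₀, hyi₀, hy'i₀⟩ := hgy.exists_sub_smul_eq_zero hg0
  set y' := y - c • fun i => (g i : ℝ)
  have hy' : (A.map (Int.cast : ℤ → ℝ)).mulVec y' = 0 := by
    rw [Matrix.mulVec_sub, Matrix.mulVec_smul, hy, Matrix.map_intCast_mulVec, hGraver.2.1]
    ext; simp
  have hsupp : ({i | y' i ≠ 0} : Finset (Fin n)) ⊂ ({i | y i ≠ 0} : Finset (Fin n)) :=
    Finset.ssubset_iff_of_subset (fun i => by simpa using mt (hy'y.eq_zero (i := i)))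
      |>.2 ⟨i₀, by simpa using hyi₀, by simpa using hy'i₀⟩
  have hcard : #{i | y' i ≠ 0} < N := hN ▸ Finset.card_lt_card hsupp
  obtain ⟨k, c', g', hk, hc', hGraver', hg'y', hy'_eq⟩ := ih _ hcard hy' rfl
  refine ⟨k + 1, Fin.cons c c', Fin.cons g g', by omega, Fin.cons hc hc',
    Fin.cons hGraver hGraver', Fin.cons hgy fun j => (hg'y' j).trans hy'y, ?_⟩
  simp only [Fin.sum_univ_succ, Fin.cons_zero, Fin.cons_succ, ← hy'_eq, y']
  abel

theorem exists_int_mulVec_eq_zero_near (A : Matrix (Fin m) (Fin n) ℤ) {G : ℝ} (hG0 : 0 ≤ G)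
    (hG : ∀ g, InGraver A g → ∀ i, |(g i : ℝ)| ≤ G) {y : Fin n → ℝ}
    (hy : (A.map (Int.cast : ℤ → ℝ)).mulVec y = 0) :
    ∃ d : Fin n → ℤ, A.mulVec d = 0 ∧ ∀ i, (d i : ℝ) ∈ Set.uIcc 0 (y i) ∧
      y i - d i ∈ Set.uIcc 0 (y i) ∧ |y i - d i| ≤ n * G := by
  obtain ⟨k, c, g, hk, hc, hGraver, hgy, hy_eq⟩ := exists_sum_inGraver A hy
  have hyi : ∀ i, y i = ∑ j, c j * g j i := fun i => by simpa using congrFun hy_eq i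
  set d : Fin n → ℤ := ∑ j, ⌊c j⌋ • g j
  have hdi : ∀ i, (d i : ℝ) = ∑ j, (⌊c j⌋ : ℝ) * g j i := fun i => by simp [d]
  have hfract : ∀ i, y i - d i = ∑ j, Int.fract (c j) * g j i := fun i => by
    simp only [hyi, hdi, ← sum_sub_distrib, ← sub_mul, Int.self_sub_floor]
  have hAd : A.mulVec d = 0 := by
    simp only [d, Matrix.mulVec_sum, Matrix.mulVec_smul, (hGraver _).2.1, smul_zero, sum_const_zero]
  refine ⟨d, hAd, fun i => ⟨?_, ?_, ?_⟩⟩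
  · rw [hdi]
    exact sum_mul_mem_uIcc hgy hyi (fun j => Int.cast_nonneg (Int.floor_nonneg.2 (hc j)))
      (fun j => Int.floor_le (c j)) i
  · rw [hfract]
    exact sum_mul_mem_uIcc hgy hyi (fun j => Int.fract_nonneg (c j))
      (fun j => by linarith [Int.cast_nonneg (R := ℝ) (Int.floor_nonneg.2 (hc j)),
        Int.floor_add_fract (c j)]) i
  · calc |y i - d i| = |∑ j, Int.fract (c j) * g j i| := by rw [hfract]
      _ ≤ ∑ j, |Int.fract (c j) * g j i| := abs_sum_le_sum_abs _ _
      _ ≤ ∑ _j : Fin k, G := sum_le_sum fun j _ => by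
          rw [abs_mul, abs_of_nonneg (Int.fract_nonneg _)]
          exact (mul_le_of_le_one_left (abs_nonneg _) (Int.fract_lt_one _).le).trans
            (hG _ (hGraver j) i)
      _ = k * G := by simp
      _ ≤ n * G := by gcongr; exact_mod_cast (by simpa using hk.trans (card_le_univ _) : k ≤ n)

end Decomposition

theorem ConvexOn.add_le_add_of_nonneg_of_pos {φ : ℝ → ℝ} (hφ : ConvexOn ℝ Set.univ φ) (a : ℝ)
    {s t : ℝ} (hs : 0 ≤ s) (ht : 0 < t) : φ (a + s) + φ (a + t) ≤ φ (a + s + t) + φ a := by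
  -- `a + s` and `a + t` are the convex combinations of `a` and `a + s + t` with swapped weights.
  set μ := s / (s + t)
  have hμ : 0 ≤ μ := by positivity
  have hμ₁ : 0 ≤ 1 - μ := by rw [sub_nonneg, div_le_one (by positivity)]; linarith
  have h₁ := hφ.2 (Set.mem_univ a) (Set.mem_univ (a + s + t)) hμ₁ hμ (by ring)
  have h₂ := hφ.2 (Set.mem_univ a) (Set.mem_univ (a + s + t)) hμ hμ₁ (by ring)
  have e₁ : (1 - μ) • a + μ • (a + s + t) = a + s := by simp only [μ, smul_eq_mul]; field_simp; ring
  have e₂ : μ • a + (1 - μ) • (a + s + t) = a + t := by simp only [μ, smul_eq_mul]; field_simp; ring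
  rw [e₁, smul_eq_mul, smul_eq_mul] at h₁
  rw [e₂, smul_eq_mul, smul_eq_mul] at h₂
  linarith

theorem ConvexOn.add_le_add_of_mul_nonneg {φ : ℝ → ℝ} (hφ : ConvexOn ℝ Set.univ φ) (a : ℝ)
    {s t : ℝ} (hst : 0 ≤ s * t) : φ (a + s) + φ (a + t) ≤ φ (a + s + t) + φ a := by
  rcases hst.eq_or_lt with h0 | hpos
  · rcases mul_eq_zero.1 h0.symm with rfl | rfl <;> simp [add_comm]
  rcases mul_pos_iff.1 hpos with ⟨hs, ht⟩ | ⟨hs, ht⟩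
  · exact hφ.add_le_add_of_nonneg_of_pos a hs.le ht
  · have h := hφ.add_le_add_of_nonneg_of_pos (a + s + t) (neg_nonneg.2 hs.le) (neg_pos.2 ht)
    ring_nf at h ⊢
    linarith

theorem sum_add_add_sum_le_of_convexOn {ι : Type*} [Fintype ι] {φ : ι → ℝ → ℝ}
    (hφ : ∀ i, ConvexOn ℝ Set.univ (φ i)) (a s t : ι → ℝ) (hst : ∀ i, 0 ≤ s i * t i) :
    ∑ i, φ i (a i + s i) + ∑ i, φ i (a i + t i) ≤ ∑ i, φ i (a i + s i + t i) + ∑ i, φ i (a i) := by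
  simp only [← sum_add_distrib]
  exact sum_le_sum fun i _ => (hφ i).add_le_add_of_mul_nonneg (a i) (hst i)

theorem mul_nonneg_of_mem_uIcc_zero {a b c : ℝ} (ha : a ∈ Set.uIcc 0 c) (hb : b ∈ Set.uIcc 0 c) :
    0 ≤ a * b := by
  rcases Set.mem_uIcc.1 ha with ha | ha <;> rcases Set.mem_uIcc.1 hb with hb | hb <;> nlinarith

section Programs

variable {m n : ℕ} {A : Matrix (Fin m) (Fin n) ℤ} {b : Fin m → ℤ} {l u : Fin n → ℤ}

theorem intFeas_iff_relFeas {z : Fin n → ℤ} :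
    IntFeas A b l u z ↔ RelFeas A b l u (fun i => (z i : ℝ)) := by
  simp only [IntFeas, RelFeas, Matrix.map_intCast_mulVec, funext_iff, Int.cast_inj, Int.cast_le]

theorem RelFeas.add_of_mem_uIcc {x y w : Fin n → ℝ} (hx : RelFeas A b l u x)
    (hxy : RelFeas A b l u (x + y)) (hw : (A.map (Int.cast : ℤ → ℝ)).mulVec w = 0)
    (hwy : ∀ i, w i ∈ Set.uIcc 0 (y i)) : RelFeas A b l u (x + w) := by
  refine ⟨by rw [Matrix.mulVec_add, hw, add_zero, hx.1], fun i => ?_⟩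
  have := hx.2 i
  have := hxy.2 i
  simp only [Pi.add_apply] at *
  rcases Set.mem_uIcc.1 (hwy i) with h | h <;> constructor <;> linarith

theorem isCompact_setOf_relFeas : IsCompact {x | RelFeas A b l u x} := by
  refine (isCompact_univ_pi fun i => isCompact_Icc (a := (l i : ℝ)) (b := u i)).of_isClosed_subset
    ?_ fun x hx => Set.mem_univ_pi.2 fun i => hx.2 i
  simp only [RelFeas, Set.ofPred_and, Set.ofPred_forall]
  exact (isClosed_eq (by fun_prop) continuous_const).inter <| isClosed_iInter fun i =>
    (isClosed_le continuous_const (continuous_apply i)).inter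
      (isClosed_le (continuous_apply i) continuous_const)

theorem exists_relOpt {f : (Fin n → ℝ) → ℝ} (hf : Continuous f) (hfeas : ∃ x, RelFeas A b l u x) :
    ∃ x, RelOpt A b l u f x := by
  obtain ⟨x, hx, hmin⟩ := isCompact_setOf_relFeas.exists_isMinOn hfeas hf.continuousOn
  exact ⟨x, hx, fun y hy => hmin hy⟩

theorem relFeas_scale_iff {c : ℕ} (hc : c ≠ 0) {x : Fin n → ℝ} :
    RelFeas A (fun i => (c : ℤ) * b i) (fun i => (c : ℤ) * l i) (fun i => (c : ℤ) * u i) x ↔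
      RelFeas A b l u (fun i => x i / c) := by
  have hc' : (0 : ℝ) < c := by positivity
  simp only [RelFeas, funext_iff, Matrix.mulVec, dotProduct, Matrix.map_apply, Int.cast_mul,
    Int.cast_natCast, le_div_iff₀ hc', div_le_iff₀ hc', mul_div_assoc']
  simp only [← sum_div, div_eq_iff hc'.ne', mul_comm (c : ℝ)]

theorem RelOpt.of_scale {c : ℕ} (hc : c ≠ 0) {f : (Fin n → ℝ) → ℝ} {x : Fin n → ℝ}
    (h : RelOpt A (fun i => (c : ℤ) * b i) (fun i => (c : ℤ) * l i) (fun i => (c : ℤ) * u i)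
      (fun x => f (fun i => x i / c)) x) :
    RelOpt A b l u f (fun i => x i / c) := by
  refine ⟨(relFeas_scale_iff hc).1 h.1, fun y hy => ?_⟩
  have hcy : ∀ i, (c : ℝ) * y i / c = y i := fun i => by field_simp
  have hfeas := (relFeas_scale_iff hc (b := b) (l := l) (u := u) (x := fun i => c * y i)).2
    (by simpa only [hcy] using hy)
  simpa only [hcy] using h.2 _ hfeas

theorem exists_relOpt_near_intOpt {f : (Fin n → ℝ) → ℝ} {φ : Fin n → ℝ → ℝ}
    (hf : ∀ x, f x = ∑ i, φ i (x i))
    (hφ : ∀ i, ConvexOn ℝ Set.univ (φ i)) {G : ℝ} (hG0 : 0 ≤ G)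
    (hG : ∀ g, InGraver A g → ∀ i, |(g i : ℝ)| ≤ G) {z : Fin n → ℤ} (hz : IntOpt A b l u f z) :
    ∃ x, RelOpt A b l u f x ∧ ∀ i, |x i - z i| ≤ n * G := by
  set zR : Fin n → ℝ := fun i => z i
  have hzR : RelFeas A b l u zR := intFeas_iff_relFeas.1 hz.1
  have hfc : Continuous f := by
    rw [show f = fun x => ∑ i, φ i (x i) from funext hf]
    exact continuous_finsetSum _ fun i _ =>
      (continuousOn_univ.1 ((hφ i).continuousOn isOpen_univ)).comp (continuous_apply i)
  obtain ⟨x, hx, hxmin⟩ := exists_relOpt hfc ⟨zR, hzR⟩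
  have hxz : zR + (x - zR) = x := add_sub_cancel _ _
  obtain ⟨d, hAd, hd⟩ := exists_int_mulVec_eq_zero_near A hG0 hG (y := x - zR)
    (by rw [Matrix.mulVec_sub, hx.1, hzR.1, sub_self])
  set dR : Fin n → ℝ := fun i => d i
  have hAdR : (A.map (Int.cast : ℤ → ℝ)).mulVec dR = 0 := by
    rw [Matrix.map_intCast_mulVec, hAd]; ext; simp
  set r := x - zR - dR
  have hcast : (fun i => ((z + d) i : ℝ)) = zR + dR := by ext i; simp [zR, dR]
  have hzd : IntFeas A b l u (z + d) := intFeas_iff_relFeas.2 <| by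
    rw [hcast]
    exact hzR.add_of_mem_uIcc (by rwa [hxz]) hAdR fun i => (hd i).1
  have hzr : RelFeas A b l u (zR + r) := hzR.add_of_mem_uIcc (by rwa [hxz])
    (by rw [Matrix.mulVec_sub, Matrix.mulVec_sub, hx.1, hzR.1, hAdR, sub_self, sub_zero])
    fun i => (hd i).2.1
  have hexchange : f (zR + dR) + f (zR + r) ≤ f x + f zR := by
    simpa [hf, r] using sum_add_add_sum_le_of_convexOn hφ zR dR r
      fun i => mul_nonneg_of_mem_uIcc_zero (hd i).1 (hd i).2.1
  have hzopt : f zR ≤ f (zR + dR) := hcast ▸ hz.2 _ hzd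
  refine ⟨zR + r, ⟨hzr, fun w hw => ?_⟩, fun i => ?_⟩
  · linarith [hxmin w hw]
  · convert (hd i).2.2 using 2
    simp only [r, zR, dR, Pi.add_apply, Pi.sub_apply]
    ring

end Programs

/-- Solving the continuous relaxation to `ε`-accuracy via a scaled-up integer
program: if `(1/p)·n·g_∞(A) ≤ ε` and `ẑ` is an optimum of
`min{f(z/p) : Az = p·b, p·l ≤ z ≤ p·u, z ∈ ℤⁿ}`, then `(1/p)·ẑ` is within
`ℓ_∞`-distance `ε` of some optimum of the continuous relaxation. -/
theorem relaxation_via_scaled_ip (m n : ℕ)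
    (A : Matrix (Fin m) (Fin n) ℤ) (b : Fin m → ℤ) (l u : Fin n → ℤ)
    (f : (Fin n → ℝ) → ℝ) (fi : Fin n → ℝ → ℝ)
    (hf : ∀ x, f x = ∑ i, fi i (x i))
    (hconv : ∀ i, ConvexOn ℝ Set.univ (fi i))
    (Ginf : ℤ) (hGinf : ∀ g, InGraver A g → ∀ i, |g i| ≤ Ginf)
    (ε : ℝ) (hε : 0 < ε) (p : ℕ) (hp : 1 ≤ p)
    (hpe : (n : ℝ) * (Ginf : ℝ) / (p : ℝ) ≤ ε)
    (zhat : Fin n → ℤ)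
    (hzhat : IntOpt A (fun i => (p : ℤ) * b i) (fun i => (p : ℤ) * l i)
      (fun i => (p : ℤ) * u i) (fun x => f (fun i => x i / (p : ℝ))) zhat) :
    ∃ xstar : Fin n → ℝ, RelOpt A b l u f xstar ∧
      ∀ i, |xstar i - (zhat i : ℝ) / (p : ℝ)| ≤ ε := by
  have hp0 : p ≠ 0 := by omega
  have hscaled_conv : ∀ i, ConvexOn ℝ Set.univ (fun t => fi i (t / p)) := fun i => by
    simpa [Function.comp_def, div_eq_inv_mul] using
      (hconv i).comp_linearMap (LinearMap.lsmul ℝ ℝ (p : ℝ)⁻¹)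
  have hG : ∀ g, InGraver A g → ∀ i, |(g i : ℝ)| ≤ max (Ginf : ℝ) 0 := fun g hg i =>
    le_max_of_le_left (by exact_mod_cast hGinf g hg i)
  obtain ⟨x, hx, hxz⟩ := exists_relOpt_near_intOpt (φ := fun i t => fi i (t / p))
    (fun x => hf _) hscaled_conv (le_max_right _ _) hG hzhat
  refine ⟨fun i => x i / p, hx.of_scale hp0, fun i => ?_⟩
  calc |x i / p - zhat i / p| = |x i - zhat i| / p := by rw [← sub_div, abs_div, Nat.abs_cast]
    _ ≤ n * max (Ginf : ℝ) 0 / p := by gcongr; exact hxz i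
    _ ≤ ε := by
      rw [mul_max_of_nonneg _ _ (Nat.cast_nonneg n), ← max_div_div_right (Nat.cast_nonneg p)]
      exact max_le hpe (by simpa using hε.le)
end
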